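/- arXiv:1801.05364 — 5 statements merged into one kernel-verified Lean document; each statement's English description precedes it below -/
import Mathlib

section
/- (Existence of minimizers / nonempty resolvent) Let V be a real Banach space, T > 0, and let the energy family E satisfy (E-a), (E-b), (E-c), and let Ψ_u : V → [0,∞) be lower semicontinuous and convex with Ψ_u(0) = 0. Let r > 0, t ∈ [0,T) with t + r ≤ T, u ∈ D, and w ∈ V* with Ψ_u*(w) < ∞. Then the Moreau–Yosida value Φ_{r,t}(w;u) = inf_{v∈V} ( rΨ_u((v−u)/r) + E_{t+r}(v) − ⟨w,v⟩ ) is a real number (neither +∞ nor −∞), the resolvent set J_{r,t}(w;u) of global minimizers is nonempty, and every minimizer belongs to D. -/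
open MeasureTheory Filter Topology Set
open scoped Classical

noncomputable section

variable {V : Type*} [NormedAddCommGroup V] [NormedSpace ℝ V]

/-- The Legendre–Fenchel transform (convex conjugate) of a real-valued functional,
with values in the extended reals. -/
def conjFn (Ψ : V → ℝ) (ξ : StrongDual ℝ V) : EReal :=
  ⨆ v : V, ((ξ v - Ψ v : ℝ) : EReal)

/-- The convex subdifferential of `Ψ` at `u`. -/
def cSubdiff (Ψ : V → ℝ) (u : V) : Set (StrongDual ℝ V) :=
  {ξ | ∀ v : V, Ψ u + ξ (v - u) ≤ Ψ v}

/-- The Fréchet subdifferential at `u ∈ D` of the functional equal to `E` on `D` and `+∞`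
off `D`:  `ξ ∈ ∂E(u)` iff `liminf_{v→u} (E(v) - E(u) - ⟨ξ,v-u⟩)/‖v-u‖ ≥ 0`, written in the
equivalent form: for all `ε > 0`, eventually near `u`, `E(v) ≥ E(u) + ⟨ξ,v-u⟩ - ε‖v-u‖`
for `v ∈ D` (for `v ∉ D` the functional is `+∞` and the inequality is automatic). -/
def frSubdiff (E : V → ℝ) (D : Set V) (u : V) : Set (StrongDual ℝ V) :=
  {ξ | u ∈ D ∧ ∀ ε > (0:ℝ), ∀ᶠ v in 𝓝 u, v ∈ D → E u + ξ (v - u) - ε * ‖v - u‖ ≤ E v}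

/-- The extension of the energy functional by `+∞` off its effective domain `D`. -/
def Eext (E : V → ℝ) (D : Set V) (v : V) : EReal :=
  if v ∈ D then ((E v : ℝ) : EReal) else ⊤

/-- `G(u) ≤ R` for `G(u) = sup_{t∈[0,T]} E_t(u)` (with `G(u) = +∞` off the domain `D`). -/
def GSublevel (T : ℝ) (E : ℝ → V → ℝ) (D : Set V) (u : V) (R : ℝ) : Prop :=
  u ∈ D ∧ ∀ t ∈ Icc (0:ℝ) T, E t u ≤ R

/-- The functional `Φ(r,t,u,w;·) : v ↦ r Ψ_u((v-u)/r) + E_{t+r}(v) - ⟨w,v⟩`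
(with `E_{t+r} = +∞` off `D`). -/
def PhiFun (T : ℝ) (E : ℝ → V → ℝ) (D : Set V) (Ψ : V → V → ℝ)
    (r t : ℝ) (u : V) (w : StrongDual ℝ V) (v : V) : EReal :=
  ((r * Ψ u (r⁻¹ • (v - u)) - w v : ℝ) : EReal) + Eext (E (t + r)) D v

/-- The Moreau–Yosida regularization `Φ_{r,t}(w;u) = inf_v Φ(r,t,u,w;v)`. -/
def PhiInf (T : ℝ) (E : ℝ → V → ℝ) (D : Set V) (Ψ : V → V → ℝ)
    (r t : ℝ) (u : V) (w : StrongDual ℝ V) : EReal :=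
  ⨅ v : V, PhiFun T E D Ψ r t u w v

/-- The resolvent set `J_{r,t}(w;u)` of global minimizers of `Φ(r,t,u,w;·)`. -/
def resolventJ (T : ℝ) (E : ℝ → V → ℝ) (D : Set V) (Ψ : V → V → ℝ)
    (r t : ℝ) (u : V) (w : StrongDual ℝ V) : Set V :=
  {v : V | PhiFun T E D Ψ r t u w v = PhiInf T E D Ψ r t u w}

/-- **(2.Ea) Constant domain:** each `E_t` is proper and lower semicontinuous with
time-independent effective domain `D`. -/
def AssumpEa (T : ℝ) (E : ℝ → V → ℝ) (D : Set V) : Prop :=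
  D.Nonempty ∧ ∀ t ∈ Icc (0:ℝ) T, LowerSemicontinuous (Eext (E t) D)

/-- **(2.Eb) Compactness of sublevels:** for some `t* ∈ [0,T]`, `E_{t*}` has compact
sublevel sets. -/
def AssumpEb (T : ℝ) (E : ℝ → V → ℝ) (D : Set V) : Prop :=
  ∃ ts ∈ Icc (0:ℝ) T, ∀ R : ℝ, IsCompact {u : V | u ∈ D ∧ E ts u ≤ R}

/-- **(2.Ec) Energetic control of power:** for `u ∈ D`, `t ↦ E_t(u)` is continuous on
`[0,T]`, differentiable on `(0,T)` with derivative `∂ₜE_t(u) = Edot t u` and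
`|∂ₜ E_t(u)| ≤ C E_t(u)`. -/
def AssumpEc (T : ℝ) (E : ℝ → V → ℝ) (D : Set V) (Edot : ℝ → V → ℝ) (C : ℝ) : Prop :=
  0 < C ∧ ∀ u ∈ D, ContinuousOn (fun t => E t u) (Icc (0:ℝ) T) ∧
    (∀ t ∈ Ioo (0:ℝ) T, HasDerivAt (fun s => E s u) (Edot t u) t) ∧
    (∀ t ∈ Ioo (0:ℝ) T, |Edot t u| ≤ C * E t u)

/-- **(2.Ed) Chain rule:** along any absolutely continuous curve `u` with integrable
subdifferential selection `ξ`, bounded energy and finite dissipation integrals, the map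
`t ↦ E_t(u(t))` is absolutely continuous with `(d/dt) E_t(u(t)) ≥ ⟨ξ(t),u'(t)⟩ + ∂ₜE_t(u(t))`
almost everywhere. -/
def AssumpEd (T : ℝ) (E : ℝ → V → ℝ) (D : Set V) (Edot : ℝ → V → ℝ)
    (Ψ : V → V → ℝ) : Prop :=
  ∀ (u u' : ℝ → V) (ξ : ℝ → StrongDual ℝ V),
    IntegrableOn u' (Ioc 0 T) →
    (∀ t ∈ Icc (0:ℝ) T, u t = u 0 + ∫ r in (0:ℝ)..t, u' r) →
    IntegrableOn ξ (Ioc 0 T) →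
    (∃ M : ℝ, ∀ t ∈ Icc (0:ℝ) T, u t ∈ D ∧ |E t (u t)| ≤ M) →
    (∀ᵐ t ∂(volume.restrict (Ioc 0 T)), ξ t ∈ frSubdiff (E t) D (u t)) →
    IntegrableOn (fun t => Ψ (u t) (u' t)) (Ioc 0 T) →
    (∃ P : ℝ → ℝ, IntegrableOn P (Ioc 0 T) ∧
      ∀ᵐ t ∂(volume.restrict (Ioc 0 T)), conjFn (Ψ (u t)) (ξ t) = ((P t : ℝ) : EReal)) →
    ∃ e' : ℝ → ℝ, IntegrableOn e' (Ioc 0 T) ∧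
      (∀ t ∈ Icc (0:ℝ) T, E t (u t) = E 0 (u 0) + ∫ r in (0:ℝ)..t, e' r) ∧
      ∀ᵐ t ∂(volume.restrict (Ioc 0 T)), ξ t (u' t) + Edot t (u t) ≤ e' t

/-- **(2.Ee) Strong-weak closedness** of the graph of `∂E_t` together with convergence of
energy and power. -/
def AssumpEe (T : ℝ) (E : ℝ → V → ℝ) (D : Set V) (Edot : ℝ → V → ℝ) : Prop :=
  ∀ t ∈ Icc (0:ℝ) T, ∀ (un : ℕ → V) (ξn : ℕ → StrongDual ℝ V) (u : V)
    (ξ : StrongDual ℝ V) (𝓔 P : ℝ),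
    (∀ n, ξn n ∈ frSubdiff (E t) D (un n)) →
    Tendsto un atTop (𝓝 u) →
    (∀ v : V, Tendsto (fun n => ξn n v) atTop (𝓝 (ξ v))) →
    Tendsto (fun n => E t (un n)) atTop (𝓝 𝓔) →
    Tendsto (fun n => Edot t (un n)) atTop (𝓝 P) →
    ξ ∈ frSubdiff (E t) D u ∧ E t u = 𝓔 ∧ P ≤ Edot t u

/-- **(2.Ψa) Dissipation potential:** each `Ψ_u : V → [0,∞)` is lower semicontinuous and
convex with `Ψ_u(0) = 0`, and any two elements of `∂Ψ_u(v)` have the same conjugate value. -/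
def AssumpPsiA (Ψ : V → V → ℝ) : Prop :=
  ∀ u : V, LowerSemicontinuous (Ψ u) ∧ ConvexOn ℝ univ (Ψ u) ∧ Ψ u 0 = 0 ∧
    (∀ v : V, 0 ≤ Ψ u v) ∧
    ∀ (v : V) (w₁ w₂ : StrongDual ℝ V),
      w₁ ∈ cSubdiff (Ψ u) v → w₂ ∈ cSubdiff (Ψ u) v →
      conjFn (Ψ u) w₁ = conjFn (Ψ u) w₂

/-- **(2.Ψb) Superlinearity:** `Ψ_u` and `Ψ*_u` are superlinear, uniformly with respect to
`u` in sublevels of `G`. -/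
def AssumpPsiB (T : ℝ) (E : ℝ → V → ℝ) (D : Set V) (Ψ : V → V → ℝ) : Prop :=
  ∀ R > (0:ℝ),
    (∀ Kc : ℝ, ∃ ρ : ℝ, ∀ v : V, ρ ≤ ‖v‖ →
      ∀ u : V, GSublevel T E D u R → Kc * ‖v‖ ≤ Ψ u v) ∧
    (∀ Kc : ℝ, ∃ ρ : ℝ, ∀ ξ : StrongDual ℝ V, ρ ≤ ‖ξ‖ →
      ∀ u : V, GSublevel T E D u R → ((Kc * ‖ξ‖ : ℝ) : EReal) ≤ conjFn (Ψ u) ξ)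

/-- **(2.Ψc) Mosco continuity of the state dependence:** `uₙ → u` strongly with uniformly
bounded energy implies `Ψ_{uₙ}` Mosco-converges to `Ψ_u` (strong and weak liminf estimates
and strong and weak recovery sequences). -/
def AssumpPsiC (T : ℝ) (E : ℝ → V → ℝ) (D : Set V) (Ψ : V → V → ℝ) : Prop :=
  ∀ (R : ℝ) (un : ℕ → V) (u : V), Tendsto un atTop (𝓝 u) →
    (∀ n, GSublevel T E D (un n) R) →
    ((∀ (v : V) (vn : ℕ → V), Tendsto vn atTop (𝓝 v) →
        ((Ψ u v : ℝ) : EReal) ≤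
          Filter.liminf (fun n => ((Ψ (un n) (vn n) : ℝ) : EReal)) atTop)
     ∧ (∀ v : V, ∃ vn : ℕ → V, Tendsto vn atTop (𝓝 v) ∧
          Tendsto (fun n => Ψ (un n) (vn n)) atTop (𝓝 (Ψ u v)))
     ∧ (∀ (v : V) (vn : ℕ → V),
          (∀ ζ : StrongDual ℝ V, Tendsto (fun n => ζ (vn n)) atTop (𝓝 (ζ v))) →
          ((Ψ u v : ℝ) : EReal) ≤
            Filter.liminf (fun n => ((Ψ (un n) (vn n) : ℝ) : EReal)) atTop)
     ∧ (∀ v : V, ∃ vn : ℕ → V,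
          (∀ ζ : StrongDual ℝ V, Tendsto (fun n => ζ (vn n)) atTop (𝓝 (ζ v))) ∧
          Tendsto (fun n => Ψ (un n) (vn n)) atTop (𝓝 (Ψ u v))))

/-- **(2.Ba) Continuity of the perturbation** on sublevels of `G`. -/
def AssumpBa (T : ℝ) (E : ℝ → V → ℝ) (D : Set V)
    (B : ℝ → V → StrongDual ℝ V) : Prop :=
  ∀ (tn : ℕ → ℝ) (un : ℕ → V) (t : ℝ) (u : V) (R : ℝ),
    (∀ n, tn n ∈ Icc (0:ℝ) T) → t ∈ Icc (0:ℝ) T →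
    Tendsto tn atTop (𝓝 t) → Tendsto un atTop (𝓝 u) →
    (∀ n, GSublevel T E D (un n) R) →
    Tendsto (fun n => B (tn n) (un n)) atTop (𝓝 (B t u))

/-- **(2.Bb) Control of `B` by the energy:** there are `β > 0` and `c ∈ (0,1)` with
`c Ψ*_u(B(t,u)/c) ≤ β(1 + E_t(u))`. -/
def AssumpBb (T : ℝ) (E : ℝ → V → ℝ) (D : Set V) (Ψ : V → V → ℝ)
    (B : ℝ → V → StrongDual ℝ V) : Prop :=
  ∃ β > (0:ℝ), ∃ c : ℝ, 0 < c ∧ c < 1 ∧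
    ∀ u ∈ D, ∀ t ∈ Icc (0:ℝ) T,
      (c : EReal) * conjFn (Ψ u) (c⁻¹ • B t u) ≤ ((β * (1 + E t u) : ℝ) : EReal)

/-! The bound `|∂ₜE_t(u)| ≤ C E_t(u)` makes `E_t(u) e^{Ct}` nondecreasing and `E_t(u) e^{-Ct}`
nonincreasing in `t`, so energies at two times are comparable and a sublevel of `E_{t+r}` lies in
a compact sublevel of `E_{t*}`. By Fenchel–Young, `Ψ*_u(w) < ∞` bounds `rΨ_u((v-u)/r) - ⟨w,v⟩`
from below, so the sublevel `{Φ ≤ Φ(u)}` has bounded `E_{t+r}`-energy and is thus contained in a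
compact set. The lower semicontinuous `Φ` attains its infimum there; the minimizer has finite
energy, so the infimum is a real number. -/

open Real

theorem monotoneOn_mul_exp_of_neg_mul_le_deriv {f f' : ℝ → ℝ} {a b c : ℝ}
    (hf : ContinuousOn f (Icc a b)) (hf' : ∀ s ∈ Ioo a b, HasDerivAt f (f' s) s)
    (hbound : ∀ s ∈ Ioo a b, -(c * f s) ≤ f' s) :
    MonotoneOn (fun s => f s * exp (c * s)) (Icc a b) := by
  have hderiv : ∀ s ∈ Ioo a b,
      HasDerivAt (fun s => f s * exp (c * s)) ((f' s + c * f s) * exp (c * s)) s := by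
    intro s hs
    exact ((hf' s hs).fun_mul ((hasDerivAt_id' s).const_mul c).exp).congr_deriv (by ring)
  refine monotoneOn_of_deriv_nonneg (convex_Icc a b) (hf.mul (by fun_prop)) ?_ ?_ <;>
    rw [interior_Icc]
  · exact fun s hs => (hderiv s hs).differentiableAt.differentiableWithinAt
  · intro s hs
    rw [(hderiv s hs).deriv]
    exact mul_nonneg (by linarith [hbound s hs]) (exp_pos _).le

theorem le_mul_exp_abs_sub_of_abs_deriv_le {f f' : ℝ → ℝ} {a b C s₁ s₂ : ℝ}
    (hf : ContinuousOn f (Icc a b)) (hf' : ∀ s ∈ Ioo a b, HasDerivAt f (f' s) s)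
    (hbound : ∀ s ∈ Ioo a b, |f' s| ≤ C * f s) (hs₁ : s₁ ∈ Icc a b) (hs₂ : s₂ ∈ Icc a b) :
    f s₁ ≤ f s₂ * exp (C * |s₁ - s₂|) := by
  rcases le_total s₁ s₂ with h | h
  · have hmono := monotoneOn_mul_exp_of_neg_mul_le_deriv (c := C) hf hf'
      (fun s hs => by linarith [neg_abs_le (f' s), hbound s hs]) hs₁ hs₂ h
    dsimp only at hmono
    have hexp : exp (C * s₂) = exp (C * |s₁ - s₂|) * exp (C * s₁) := by
      rw [← exp_add, abs_of_nonpos (by linarith)]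
      ring_nf
    rw [hexp, ← mul_assoc] at hmono
    exact le_of_mul_le_mul_right hmono (exp_pos _)
  · have hanti := monotoneOn_mul_exp_of_neg_mul_le_deriv (f := fun s => -f s) (c := -C)
      hf.neg (fun s hs => (hf' s hs).neg)
      (fun s hs => by linarith [le_abs_self (f' s), hbound s hs]) hs₂ hs₁ h
    dsimp only at hanti
    have hexp : exp (-C * s₂) = exp (C * |s₁ - s₂|) * exp (-C * s₁) := by
      rw [← exp_add, abs_of_nonneg (by linarith)]
      ring_nf
    simp only [neg_mul, neg_le_neg_iff] at hanti
    rw [← neg_mul, ← neg_mul, hexp, ← mul_assoc] at hanti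
    exact le_of_mul_le_mul_right hanti (exp_pos _)

theorem LowerSemicontinuous.exists_forall_le_of_sublevel_subset {α β : Type*}
    [TopologicalSpace α] [LinearOrder β] {f : α → β} (hf : LowerSemicontinuous f)
    {K : Set α} (hK : IsCompact K) {x₀ : α} (hsub : {x | f x ≤ f x₀} ⊆ K) :
    ∃ a, ∀ x, f a ≤ f x := by
  obtain ⟨a, haK, hmin⟩ :=
    (hf.lowerSemicontinuousOn K).exists_isMinOn ⟨x₀, hsub le_rfl⟩ hK
  refine ⟨a, fun x => ?_⟩
  by_cases hx : x ∈ K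
  · exact hmin hx
  · exact (hmin (hsub le_rfl)).trans (lt_of_not_ge fun h => hx (hsub h)).le

theorem coe_sub_le_conjFn (Ψ : V → ℝ) (ξ : StrongDual ℝ V) (v : V) :
    ((ξ v - Ψ v : ℝ) : EReal) ≤ conjFn Ψ ξ :=
  le_iSup (fun v : V => ((ξ v - Ψ v : ℝ) : EReal)) v

theorem conjFn_ne_bot (Ψ : V → ℝ) (ξ : StrongDual ℝ V) : conjFn Ψ ξ ≠ ⊥ :=
  ne_bot_of_le_ne_bot (EReal.coe_ne_bot _) (coe_sub_le_conjFn Ψ ξ 0)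

theorem sub_mul_le_mul_inv_smul_of_conjFn_eq {Ψ : V → ℝ} {ξ : StrongDual ℝ V} {S r : ℝ}
    (hS : conjFn Ψ ξ = S) (hr : 0 < r) (v : V) : ξ v - r * S ≤ r * Ψ (r⁻¹ • v) := by
  have hFY : ξ (r⁻¹ • v) - Ψ (r⁻¹ • v) ≤ S := by
    exact_mod_cast hS ▸ coe_sub_le_conjFn Ψ ξ (r⁻¹ • v)
  rw [map_smul, smul_eq_mul] at hFY
  have hscaled := mul_le_mul_of_nonneg_left hFY hr.le
  rw [mul_sub, ← mul_assoc, mul_inv_cancel₀ hr.ne', one_mul] at hscaled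
  linarith

section PhiFun

variable {T : ℝ} {E : ℝ → V → ℝ} {D : Set V} {Ψ : V → V → ℝ} {r t : ℝ} {u x : V}
  {w : StrongDual ℝ V}

theorem phiFun_of_mem (hx : x ∈ D) :
    PhiFun T E D Ψ r t u w x =
      ((r * Ψ u (r⁻¹ • (x - u)) - w x + E (t + r) x : ℝ) : EReal) := by
  simp only [PhiFun, Eext, if_pos hx, EReal.coe_add]

theorem mem_of_phiFun_ne_top (hx : PhiFun T E D Ψ r t u w x ≠ ⊤) : x ∈ D := by
  by_contra hxD
  simp only [PhiFun, Eext, if_neg hxD, EReal.coe_add_top, ne_eq, not_true_eq_false] at hx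

theorem lowerSemicontinuous_phiFun (hΨ : LowerSemicontinuous (Ψ u)) (hr : 0 ≤ r)
    (hE : LowerSemicontinuous (Eext (E (t + r)) D)) :
    LowerSemicontinuous (PhiFun T E D Ψ r t u w) := by
  have hdiss : LowerSemicontinuous fun x : V => r * Ψ u (r⁻¹ • (x - u)) - w x := by
    have hΨr : LowerSemicontinuous fun x : V => r * Ψ u (r⁻¹ • (x - u)) :=
      (continuous_const_mul r).comp_lowerSemicontinuous
        (hΨ.comp (by fun_prop)) (monotone_mul_left_of_nonneg hr)
    simpa only [sub_eq_add_neg] using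
      hΨr.add (show Continuous fun x => -w x by fun_prop).lowerSemicontinuous
  refine LowerSemicontinuous.add'
    (continuous_coe_real_ereal.comp_lowerSemicontinuous hdiss EReal.coe_strictMono.monotone) hE
    fun x => EReal.continuousAt_add (.inl (EReal.coe_ne_top _)) (.inl (EReal.coe_ne_bot _))

theorem mem_and_energy_le_of_phiFun_le {S c : ℝ} (hS : conjFn (Ψ u) w = S) (hr : 0 < r)
    (hx : PhiFun T E D Ψ r t u w x ≤ c) : x ∈ D ∧ E (t + r) x ≤ c + w u + r * S := by
  have hxD : x ∈ D := mem_of_phiFun_ne_top (ne_top_of_le_ne_top (EReal.coe_ne_top c) hx)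
  rw [phiFun_of_mem hxD, EReal.coe_le_coe_iff] at hx
  have hFY := sub_mul_le_mul_inv_smul_of_conjFn_eq hS hr (x - u)
  rw [map_sub] at hFY
  exact ⟨hxD, by linarith⟩

end PhiFun

theorem resolvent_nonempty_general
    (T : ℝ)
    (E : ℝ → V → ℝ) (D : Set V) (Edot : ℝ → V → ℝ) (C : ℝ) (Ψ : V → V → ℝ)
    (hEa : AssumpEa T E D) (hEb : AssumpEb T E D) (hEc : AssumpEc T E D Edot C)
    (hΨ : ∀ u : V, LowerSemicontinuous (Ψ u) ∧ ConvexOn ℝ univ (Ψ u) ∧ Ψ u 0 = 0 ∧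
      ∀ v : V, 0 ≤ Ψ u v)
    (r t : ℝ) (hr : 0 < r) (ht : t ∈ Ico (0:ℝ) T) (htr : t + r ≤ T)
    (u : V) (hu : u ∈ D) (w : StrongDual ℝ V)
    (hw : conjFn (Ψ u) w ≠ ⊤) :
    (∃ m : ℝ, PhiInf T E D Ψ r t u w = ((m : ℝ) : EReal))
    ∧ (resolventJ T E D Ψ r t u w).Nonempty
    ∧ ∀ v ∈ resolventJ T E D Ψ r t u w, v ∈ D := by
  obtain ⟨ts, hts, hcompact⟩ := hEb
  have htr' : t + r ∈ Icc 0 T := ⟨by linarith [ht.1], htr⟩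
  obtain ⟨S, hS⟩ : ∃ S : ℝ, conjFn (Ψ u) w = S :=
    ⟨_, (EReal.coe_toReal hw (conjFn_ne_bot _ _)).symm⟩
  set Φ := PhiFun T E D Ψ r t u w
  set c₀ := r * Ψ u (r⁻¹ • (u - u)) - w u + E (t + r) u
  have hΦu : Φ u = c₀ := phiFun_of_mem hu
  have hsub : {x | Φ x ≤ Φ u} ⊆
      {x | x ∈ D ∧ E ts x ≤ (c₀ + w u + r * S) * exp (C * |ts - (t + r)|)} := by
    intro x hx
    obtain ⟨hxD, hEx⟩ := mem_and_energy_le_of_phiFun_le hS hr (hx.trans_eq hΦu)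
    obtain ⟨hcont, hderiv, hbound⟩ := hEc.2 x hxD
    exact ⟨hxD, (le_mul_exp_abs_sub_of_abs_deriv_le hcont hderiv hbound hts htr').trans
      (by gcongr)⟩
  obtain ⟨v, hv⟩ := (lowerSemicontinuous_phiFun (hΨ u).1 hr.le
    (hEa.2 _ htr')).exists_forall_le_of_sublevel_subset (hcompact _) hsub
  have hJ : Φ v = PhiInf T E D Ψ r t u w := le_antisymm (le_iInf hv) (iInf_le _ v)
  have hmem : ∀ x, Φ x = Φ v → x ∈ D := fun x hx =>
    (mem_and_energy_le_of_phiFun_le hS hr ((hx.trans_le (hv u)).trans_eq hΦu)).1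
  exact ⟨⟨_, hJ.symm.trans (phiFun_of_mem (hmem v rfl))⟩, ⟨v, hJ⟩,
    fun x hx => hmem x (hx.trans hJ.symm)⟩

/-- **Lemma 2.3 (Existence of minimizers / nonempty resolvent).** Under (2.Ea)–(2.Ec) and the
basic dissipation-potential assumptions, for `u ∈ D` and `w ∈ V*` with `Ψ*_u(w) < ∞`, the
Moreau–Yosida value `Φ_{r,t}(w;u)` is a real number, the resolvent set `J_{r,t}(w;u)` is
nonempty, and every minimizer belongs to `D`. -/
theorem resolvent_nonempty
    (T : ℝ) (hT : 0 < T)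
    (E : ℝ → V → ℝ) (D : Set V) (Edot : ℝ → V → ℝ) (C : ℝ) (Ψ : V → V → ℝ)
    (hEa : AssumpEa T E D) (hEb : AssumpEb T E D) (hEc : AssumpEc T E D Edot C)
    (hΨ : ∀ u : V, LowerSemicontinuous (Ψ u) ∧ ConvexOn ℝ univ (Ψ u) ∧ Ψ u 0 = 0 ∧
      ∀ v : V, 0 ≤ Ψ u v)
    (r t : ℝ) (hr : 0 < r) (ht : t ∈ Ico (0:ℝ) T) (htr : t + r ≤ T)
    (u : V) (hu : u ∈ D) (w : StrongDual ℝ V)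
    (hw : conjFn (Ψ u) w ≠ ⊤) :
    (∃ m : ℝ, PhiInf T E D Ψ r t u w = ((m : ℝ) : EReal))
    ∧ (resolventJ T E D Ψ r t u w).Nonempty
    ∧ ∀ v ∈ resolventJ T E D Ψ r t u w, v ∈ D :=
  resolvent_nonempty_general T E D Edot C Ψ hEa hEb hEc hΨ r t hr ht htr u hu w hw
end
end

section
/- (Almost-everywhere differentiability of the Moreau–Yosida value) Let V be a real Banach space, T > 0, let the energy family E satisfy (E-a), (E-b), (E-c) (with constant C), and let the dissipation potentials Ψ satisfy (Ψ-a) and (Ψ-b). Fix t ∈ [0,T), u ∈ D and w ∈ V* with Ψ_u*(w) < ∞. Then the map r ↦ Φ_{r,t}(w;u) − r·C·e^{CT}·( G(u) + T·Ψ_u*(w) ) is non-increasing on (0, T−t); in particular, the map r ↦ Φ_{r,t}(w;u) is differentiable at almost every r ∈ (0, T−t). -/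
open MeasureTheory Filter Topology Set
open scoped Classical

noncomputable section

variable {V : Type*} [NormedAddCommGroup V] [NormedSpace ℝ V]

/-! Compare `Φ_{r₂,t}(w;u)` with `Φ_{r₁,t}(w;u)` for `r₁ ≤ r₂` by testing both with the same
`v`. Convexity and `Ψ_u(0) = 0` make `r ↦ r Ψ_u((v-u)/r)` non-increasing, and Gronwall's
inequality, from `|∂ₜE| ≤ C E`, gives `E_{t+r₂}(v) ≤ e^{C(r₂-r₁)} E_{t+r₁}(v)`. Taking the
infimum over `v` yields `Φ_{r₂} ≤ e^{C(r₂-r₁)} Φ_{r₁} + (⟨w,u⟩ + r₁ Ψ_u^*(w))(e^{C(r₂-r₁)} - 1)`.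
Testing with `v = u` and the Fenchel–Young inequality bound `Φ_{r₁} + ⟨w,u⟩ + r₁ Ψ_u^*(w)`
between `0` and `G(u) + T Ψ_u^*(w)`, so the increment is at most
`C e^{CT} (G(u) + T Ψ_u^*(w)) (r₂ - r₁)`. The resulting monotone function is differentiable
almost everywhere by Lebesgue's theorem. -/

theorem Real.exp_sub_one_le_mul_exp (x : ℝ) : Real.exp x - 1 ≤ x * Real.exp x := by
  have h := mul_le_mul_of_nonneg_right (Real.add_one_le_exp (-x)) (Real.exp_pos x).le
  rw [← Real.exp_add, neg_add_cancel, Real.exp_zero] at h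
  linarith

theorem ae_differentiableAt_of_antitoneOn_sub_mul {f : ℝ → ℝ} {K : ℝ} {s : Set ℝ}
    (hs : IsOpen s) (hf : AntitoneOn (fun x => f x - K * x) s) :
    ∀ᵐ x ∂volume.restrict s, DifferentiableAt ℝ f x := by
  filter_upwards [hf.neg.ae_differentiableWithinAt hs.measurableSet,
    ae_restrict_mem hs.measurableSet] with x hdiff hx
  have hg : DifferentiableAt ℝ (fun y => -(-(f y - K * y)) + K * y) x :=
    (hdiff.differentiableAt (hs.mem_nhds hx)).neg.add (differentiableAt_id.const_mul K)
  simpa using hg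

theorem ConvexOn.antitoneOn_mul_apply_inv_smul {E : Type*} [AddCommGroup E] [Module ℝ E]
    {f : E → ℝ} (hf : ConvexOn ℝ univ f) (hf0 : f 0 = 0) (x : E) :
    AntitoneOn (fun r : ℝ => r * f (r⁻¹ • x)) (Ioi 0) := by
  intro r₁ (hr₁ : 0 < r₁) r₂ (hr₂ : 0 < r₂) h₁₂
  have hcomb : r₂⁻¹ • x = (r₁ / r₂) • (r₁⁻¹ • x) + (1 - r₁ / r₂) • (0 : E) := by
    rw [smul_zero, add_zero, smul_smul]
    field_simp
  have hconv := hf.2 (mem_univ (r₁⁻¹ • x)) (mem_univ 0) (div_pos hr₁ hr₂).le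
    (sub_nonneg.2 ((div_le_one hr₂).2 h₁₂)) (add_sub_cancel _ _)
  rw [← hcomb, hf0, smul_eq_mul, smul_eq_mul, mul_zero, add_zero] at hconv
  calc r₂ * f (r₂⁻¹ • x) ≤ r₂ * (r₁ / r₂ * f (r₁⁻¹ • x)) := by gcongr
    _ = r₁ * f (r₁⁻¹ • x) := by field_simp

theorem apply_le_add_of_conjFn_eq {Ψ : V → ℝ} {ξ : StrongDual ℝ V} {p : ℝ}
    (hp : conjFn Ψ ξ = p) (v : V) : ξ v ≤ Ψ v + p := by
  have h : ((ξ v - Ψ v : ℝ) : EReal) ≤ conjFn Ψ ξ :=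
    le_iSup (fun v => ((ξ v - Ψ v : ℝ) : EReal)) v
  rw [hp, EReal.coe_le_coe_iff] at h
  linarith

theorem apply_le_mul_apply_inv_smul_add {Ψ : V → ℝ} {ξ : StrongDual ℝ V} {p r : ℝ}
    (hp : ∀ v, ξ v ≤ Ψ v + p) (hr : 0 < r) (v : V) : ξ v ≤ r * Ψ (r⁻¹ • v) + r * p := by
  calc ξ v = r * ξ (r⁻¹ • v) := by rw [map_smul, smul_eq_mul, mul_inv_cancel_left₀ hr.ne']
    _ ≤ r * (Ψ (r⁻¹ • v) + p) := by gcongr; exact hp _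
    _ = r * Ψ (r⁻¹ • v) + r * p := mul_add _ _ _

namespace AssumpEc

variable {W : Type*} {T C : ℝ} {E Edot : ℝ → W → ℝ} {D : Set W} {v : W}

theorem nonneg (h : AssumpEc T E D Edot C) (hv : v ∈ D) {s : ℝ} (hs : s ∈ Ioo 0 T) :
    0 ≤ E s v :=
  nonneg_of_mul_nonneg_right ((abs_nonneg _).trans ((h.2 v hv).2.2 s hs)) h.1

theorem le_sSup_image (h : AssumpEc T E D Edot C) (hv : v ∈ D) {s : ℝ} (hs : s ∈ Icc 0 T) :
    E s v ≤ sSup ((fun s => E s v) '' Icc 0 T) :=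
  le_csSup (isCompact_Icc.image_of_continuousOn (h.2 v hv).1).bddAbove (mem_image_of_mem _ hs)

theorem le_mul_exp (h : AssumpEc T E D Edot C) (hv : v ∈ D) {s₁ s₂ : ℝ} (h₁ : 0 < s₁)
    (h₁₂ : s₁ ≤ s₂) (h₂ : s₂ < T) : E s₂ v ≤ E s₁ v * Real.exp (C * (s₂ - s₁)) := by
  obtain ⟨hcont, hderiv, hbound⟩ := h.2 v hv
  have hIcc : Icc s₁ s₂ ⊆ Ioo 0 T := fun s hs => ⟨h₁.trans_le hs.1, hs.2.trans_lt h₂⟩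
  have hnorm : ∀ s ∈ Icc s₁ s₂, ‖E s v‖ = E s v := fun s hs =>
    Real.norm_of_nonneg (h.nonneg hv (hIcc hs))
  have hgron := norm_le_gronwallBound_of_norm_deriv_right_le (f := fun s => E s v)
    (f' := fun s => Edot s v) (ε := 0)
    (hcont.mono (hIcc.trans Ioo_subset_Icc_self))
    (fun s hs => (hderiv s (hIcc (Ico_subset_Icc_self hs))).hasDerivWithinAt)
    le_rfl
    (fun s hs => by
      rw [Real.norm_eq_abs, hnorm s (Ico_subset_Icc_self hs), add_zero]
      exact hbound s (hIcc (Ico_subset_Icc_self hs)))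
    s₂ (right_mem_Icc.2 h₁₂)
  rwa [gronwallBound_ε0, hnorm s₂ (right_mem_Icc.2 h₁₂), hnorm s₁ (left_mem_Icc.2 h₁₂)] at hgron

end AssumpEc

section MoreauYosida

variable {T : ℝ} {E : ℝ → V → ℝ} {D : Set V} {Ψ : V → V → ℝ} {r t : ℝ} {u v : V}
  {w : StrongDual ℝ V}

theorem PhiFun_of_mem (hv : v ∈ D) :
    PhiFun T E D Ψ r t u w v = ((r * Ψ u (r⁻¹ • (v - u)) - w v + E (t + r) v : ℝ) : EReal) := by
  rw [PhiFun, Eext, if_pos hv, EReal.coe_add]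

theorem PhiFun_of_notMem (hv : v ∉ D) : PhiFun T E D Ψ r t u w v = ⊤ := by
  rw [PhiFun, Eext, if_neg hv, EReal.coe_add_top]

theorem PhiInf_le_coe (hu : u ∈ D) (hΨ0 : Ψ u 0 = 0) :
    PhiInf T E D Ψ r t u w ≤ ((E (t + r) u - w u : ℝ) : EReal) := by
  refine (iInf_le _ u).trans_eq ?_
  rw [PhiFun_of_mem hu, sub_self, smul_zero, hΨ0]
  ring_nf

theorem coe_le_PhiInf {p : ℝ} (hp : ∀ x, w x ≤ Ψ u x + p) (hr : 0 < r)
    (hE : ∀ v ∈ D, 0 ≤ E (t + r) v) :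
    ((-w u - r * p : ℝ) : EReal) ≤ PhiInf T E D Ψ r t u w := by
  refine le_iInf fun v => ?_
  by_cases hv : v ∈ D
  · rw [PhiFun_of_mem hv, EReal.coe_le_coe_iff]
    have hwv : w v = w u + w (v - u) := by rw [← map_add, add_sub_cancel]
    linarith [apply_le_mul_apply_inv_smul_add hp hr (v - u), hE v hv]
  · rw [PhiFun_of_notMem hv]
    exact le_top

variable {Edot : ℝ → V → ℝ} {C p : ℝ}

theorem PhiInf_eq_coe_toReal (hEc : AssumpEc T E D Edot C) (hΨ0 : Ψ u 0 = 0)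
    (hp : ∀ x, w x ≤ Ψ u x + p) (hu : u ∈ D) (ht : 0 ≤ t) (hr : r ∈ Ioo 0 (T - t)) :
    PhiInf T E D Ψ r t u w = (PhiInf T E D Ψ r t u w).toReal := by
  have hlower := coe_le_PhiInf (T := T) (t := t) hp hr.1
    fun v hv => hEc.nonneg hv ⟨by linarith [hr.1], by linarith [hr.2]⟩
  have hupper := PhiInf_le_coe (T := T) (E := E) (r := r) (t := t) (w := w) hu hΨ0
  exact (EReal.coe_toReal (ne_top_of_le_ne_top (EReal.coe_ne_top _) hupper)
    (ne_bot_of_le_ne_bot (EReal.coe_ne_bot _) hlower)).symm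

variable {r₁ r₂ : ℝ}

theorem PhiInf_toReal_le_exp_mul_PhiFun_add (hEc : AssumpEc T E D Edot C)
    (hΨ : ConvexOn ℝ univ (Ψ u)) (hΨ0 : Ψ u 0 = 0) (hp : ∀ x, w x ≤ Ψ u x + p) (hu : u ∈ D)
    (ht : 0 ≤ t) (hr₁ : r₁ ∈ Ioo 0 (T - t)) (hr₂ : r₂ ∈ Ioo 0 (T - t)) (h₁₂ : r₁ ≤ r₂)
    (hv : v ∈ D) :
    (PhiInf T E D Ψ r₂ t u w).toReal ≤
      Real.exp (C * (r₂ - r₁)) * (r₁ * Ψ u (r₁⁻¹ • (v - u)) - w v + E (t + r₁) v)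
        + (w u + r₁ * p) * (Real.exp (C * (r₂ - r₁)) - 1) := by
  set q := Real.exp (C * (r₂ - r₁))
  have hq : 1 ≤ q := Real.one_le_exp (mul_nonneg hEc.1.le (sub_nonneg.2 h₁₂))
  have htest : (PhiInf T E D Ψ r₂ t u w).toReal ≤
      r₂ * Ψ u (r₂⁻¹ • (v - u)) - w v + E (t + r₂) v := by
    have h := iInf_le (PhiFun T E D Ψ r₂ t u w) v
    rwa [← PhiInf, PhiInf_eq_coe_toReal hEc hΨ0 hp hu ht hr₂, PhiFun_of_mem hv,
      EReal.coe_le_coe_iff] at h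
  have hdiss := hΨ.antitoneOn_mul_apply_inv_smul hΨ0 (v - u) hr₁.1 (hr₁.1.trans_le h₁₂) h₁₂
  have hgron : E (t + r₂) v ≤ E (t + r₁) v * q := by
    have h := hEc.le_mul_exp hv (s₁ := t + r₁) (s₂ := t + r₂) (by linarith [hr₁.1])
      (by linarith) (by linarith [hr₂.2])
    rwa [add_sub_add_left_eq_sub] at h
  have hwv : w v = w u + w (v - u) := by rw [← map_add, add_sub_cancel]
  have hpair := apply_le_mul_apply_inv_smul_add hp hr₁.1 (v - u)
  nlinarith [mul_nonneg (sub_nonneg.2 hq) (sub_nonneg.2 hpair)]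

theorem PhiInf_toReal_le_exp_mul_add (hEc : AssumpEc T E D Edot C)
    (hΨ : ConvexOn ℝ univ (Ψ u)) (hΨ0 : Ψ u 0 = 0) (hp : ∀ x, w x ≤ Ψ u x + p) (hu : u ∈ D)
    (ht : 0 ≤ t) (hr₁ : r₁ ∈ Ioo 0 (T - t)) (hr₂ : r₂ ∈ Ioo 0 (T - t)) (h₁₂ : r₁ ≤ r₂) :
    (PhiInf T E D Ψ r₂ t u w).toReal ≤
      Real.exp (C * (r₂ - r₁)) * (PhiInf T E D Ψ r₁ t u w).toReal
        + (w u + r₁ * p) * (Real.exp (C * (r₂ - r₁)) - 1) := by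
  set q := Real.exp (C * (r₂ - r₁))
  have hq : 0 < q := Real.exp_pos _
  have hinf : ((((PhiInf T E D Ψ r₂ t u w).toReal - (w u + r₁ * p) * (q - 1)) / q : ℝ) : EReal)
      ≤ PhiInf T E D Ψ r₁ t u w := le_iInf fun v => by
    by_cases hv : v ∈ D
    · rw [PhiFun_of_mem hv, EReal.coe_le_coe_iff, div_le_iff₀ hq]
      linarith [PhiInf_toReal_le_exp_mul_PhiFun_add hEc hΨ hΨ0 hp hu ht hr₁ hr₂ h₁₂ hv]
    · rw [PhiFun_of_notMem hv]
      exact le_top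
  rw [PhiInf_eq_coe_toReal hEc hΨ0 hp hu ht hr₁, EReal.coe_le_coe_iff, div_le_iff₀ hq] at hinf
  linarith

theorem antitoneOn_PhiInf_toReal_sub_mul {GR : ℝ} (hEc : AssumpEc T E D Edot C)
    (hΨ : ConvexOn ℝ univ (Ψ u)) (hΨ0 : Ψ u 0 = 0) (hp : ∀ x, w x ≤ Ψ u x + p) (hu : u ∈ D)
    (ht : 0 ≤ t) (hGR : ∀ s ∈ Icc 0 T, E s u ≤ GR) :
    AntitoneOn
      (fun r => (PhiInf T E D Ψ r t u w).toReal - C * Real.exp (C * T) * (GR + T * p) * r)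
      (Ioo 0 (T - t)) := by
  intro r₁ hr₁ r₂ hr₂ h₁₂
  set g₁ := (PhiInf T E D Ψ r₁ t u w).toReal
  have hfin := PhiInf_eq_coe_toReal hEc hΨ0 hp hu ht hr₁
  have hupper : g₁ ≤ GR - w u := by
    have h := PhiInf_le_coe (T := T) (E := E) (r := r₁) (t := t) (w := w) hu hΨ0
    rw [hfin, EReal.coe_le_coe_iff] at h
    linarith [hGR (t + r₁) ⟨by linarith [hr₁.1], by linarith [hr₁.2]⟩]
  have hlower : -w u - r₁ * p ≤ g₁ := by
    have h := coe_le_PhiInf (T := T) (t := t) hp hr₁.1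
      fun v hv => hEc.nonneg hv ⟨by linarith [hr₁.1], by linarith [hr₁.2]⟩
    rwa [hfin, EReal.coe_le_coe_iff] at h
  have hp0 : 0 ≤ p := by simpa [hΨ0] using hp 0
  have hr₁T : r₁ * p ≤ T * p := mul_le_mul_of_nonneg_right (by linarith [hr₁.2]) hp0
  set x := C * (r₂ - r₁)
  have hx : 0 ≤ x := mul_nonneg hEc.1.le (sub_nonneg.2 h₁₂)
  have hexp : Real.exp x - 1 ≤ x * Real.exp (C * T) :=
    (Real.exp_sub_one_le_mul_exp x).trans (mul_le_mul_of_nonneg_left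
      (Real.exp_le_exp.2 (mul_le_mul_of_nonneg_left (by linarith [hr₁.1, hr₂.2]) hEc.1.le)) hx)
  have hincr := PhiInf_toReal_le_exp_mul_add hEc hΨ hΨ0 hp hu ht hr₁ hr₂ h₁₂
  calc (PhiInf T E D Ψ r₂ t u w).toReal - C * Real.exp (C * T) * (GR + T * p) * r₂
      ≤ g₁ + (g₁ + w u + r₁ * p) * (Real.exp x - 1)
        - C * Real.exp (C * T) * (GR + T * p) * r₂ := by linarith
    _ ≤ g₁ + (GR + T * p) * (x * Real.exp (C * T))
        - C * Real.exp (C * T) * (GR + T * p) * r₂ := by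
      gcongr g₁ + ?_ - _
      calc (g₁ + w u + r₁ * p) * (Real.exp x - 1) ≤ (GR + T * p) * (Real.exp x - 1) := by
            gcongr
            · linarith [Real.add_one_le_exp x]
            · linarith
        _ ≤ (GR + T * p) * (x * Real.exp (C * T)) := by gcongr; linarith
    _ = g₁ - C * Real.exp (C * T) * (GR + T * p) * r₁ := by ring

end MoreauYosida

theorem moreau_yosida_ae_differentiable_general
    (T : ℝ)
    (E : ℝ → V → ℝ) (D : Set V) (Edot : ℝ → V → ℝ) (C : ℝ) (Ψ : V → V → ℝ)
    (hEc : AssumpEc T E D Edot C)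
    (hPa : AssumpPsiA Ψ)
    (t : ℝ) (ht : t ∈ Ico (0:ℝ) T) (u : V) (hu : u ∈ D) (w : StrongDual ℝ V)
    (p : ℝ) (hp : conjFn (Ψ u) w = ((p : ℝ) : EReal))
    (GR : ℝ) (hGR : GR = sSup ((fun s => E s u) '' Icc (0:ℝ) T)) :
    AntitoneOn
      (fun r => PhiInf T E D Ψ r t u w
        - ((C * Real.exp (C * T) * (GR + T * p) * r : ℝ) : EReal))
      (Ioo (0:ℝ) (T - t))
    ∧ ∀ᵐ r ∂(volume.restrict (Ioo (0:ℝ) (T - t))),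
        ∃ d : ℝ, HasDerivAt (fun s => (PhiInf T E D Ψ s t u w).toReal) d r := by
  obtain ⟨-, hΨ, hΨ0, -, -⟩ := hPa u
  have hFY := apply_le_add_of_conjFn_eq hp
  have hanti := antitoneOn_PhiInf_toReal_sub_mul hEc hΨ hΨ0 hFY hu ht.1
    fun s hs => hGR ▸ hEc.le_sSup_image hu hs
  refine ⟨fun r₁ hr₁ r₂ hr₂ h₁₂ => ?_,
    (ae_differentiableAt_of_antitoneOn_sub_mul isOpen_Ioo hanti).mono
      fun r hr => ⟨_, hr.hasDerivAt⟩⟩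
  dsimp only
  rw [PhiInf_eq_coe_toReal hEc hΨ0 hFY hu ht.1 hr₁, PhiInf_eq_coe_toReal hEc hΨ0 hFY hu ht.1 hr₂]
  exact_mod_cast hanti hr₁ hr₂ h₁₂

/-- **Almost-everywhere differentiability of the Moreau–Yosida value** (part of Lemma 2.4,
see (2.21)). With `p = Ψ*_u(w) < ∞` and `GR = sup_{s∈[0,T]} E_s(u)`, the map
`r ↦ Φ_{r,t}(w;u) - r C e^{CT} (GR + T p)` is non-increasing on `(0, T-t)`; in particular
`r ↦ Φ_{r,t}(w;u)` is differentiable (as a real-valued map) at almost every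
`r ∈ (0, T-t)`. -/
theorem moreau_yosida_ae_differentiable
    (T : ℝ) (hT : 0 < T)
    (E : ℝ → V → ℝ) (D : Set V) (Edot : ℝ → V → ℝ) (C : ℝ) (Ψ : V → V → ℝ)
    (hEa : AssumpEa T E D) (hEb : AssumpEb T E D) (hEc : AssumpEc T E D Edot C)
    (hPa : AssumpPsiA Ψ) (hPb : AssumpPsiB T E D Ψ)
    (t : ℝ) (ht : t ∈ Ico (0:ℝ) T) (u : V) (hu : u ∈ D) (w : StrongDual ℝ V)
    (p : ℝ) (hp : conjFn (Ψ u) w = ((p : ℝ) : EReal))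
    (GR : ℝ) (hGR : GR = sSup ((fun s => E s u) '' Icc (0:ℝ) T)) :
    AntitoneOn
      (fun r => PhiInf T E D Ψ r t u w
        - ((C * Real.exp (C * T) * (GR + T * p) * r : ℝ) : EReal))
      (Ioo (0:ℝ) (T - t))
    ∧ ∀ᵐ r ∂(volume.restrict (Ioo (0:ℝ) (T - t))),
        ∃ d : ℝ, HasDerivAt (fun s => (PhiInf T E D Ψ s t u w).toReal) d r :=
  moreau_yosida_ae_differentiable_general T E D Edot C Ψ hEc hPa t ht u hu w p hp GR hGR
end
end

section
/- (A priori energy bound from the energy-dissipation balance) Let V be a real Banach space, T > 0, E : [0,T] × V → (0,+∞] an energy family with time-independent domain D, such that for u ∈ D the map t ↦ E_t(u) is differentiable on (0,T) with |∂_t E_t(u)| ≤ C_T·E_t(u), let Ψ_u : V → [0,∞) be dissipation potentials with nonnegative conjugates Ψ_u* ≥ 0, and let B : [0,T] × V → V* satisfy Ψ_u*(B(t,u)) ≤ C_B·E_t(u) for all t and u ∈ D. Suppose u ∈ AC([0,T];V) takes values in D, ξ : (0,T) → V* is strongly measurable with r ↦ ∂_r E_r(u(r)) integrable, and for every s ∈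 [0,T] the energy-dissipation balance holds: E_s(u(s)) + ∫₀^s ( Ψ_{u(r)}(u'(r)) + Ψ*_{u(r)}(B(r,u(r)) − ξ(r)) ) dr = E_0(u(0)) + ∫₀^s ( ∂_r E_r(u(r)) + ⟨B(r,u(r)), u'(r)⟩ ) dr. Then E_t(u(t)) ≤ E_0(u(0))·e^{(C_T + C_B)·t} for all t ∈ [0,T]. -/
/-!
Write `f(t) = E_t(u(t))`. The energy-dissipation balance says that `f` is an absolutely
continuous function with `f(t) = f(0) + ∫₀ᵗ g`, where the net power `g` is the energy power
plus the perturbation power `⟨B, u'⟩`, minus the dissipation `Ψ(u') + Ψ*(B - ξ)`.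
By Fenchel–Young, `⟨B, u'⟩ - Ψ(u') ≤ Ψ*(B) ≤ C_B f`; the power is at most `C_T f` and
`Ψ*(B - ξ) ≥ 0`, so `g ≤ (C_T + C_B) f` almost everywhere, and Grönwall's inequality in
integral form gives the exponential bound.
-/

open MeasureTheory Filter Topology Set

noncomputable section

variable {V : Type*} [NormedAddCommGroup V] [NormedSpace ℝ V]

theorem sub_le_of_conjFn_le {Ψ : V → ℝ} {ξ : StrongDual ℝ V} {c : ℝ}
    (h : conjFn Ψ ξ ≤ c) (v : V) : ξ v - Ψ v ≤ c :=
  EReal.coe_le_coe_iff.1 <| (le_iSup (fun v => ((ξ v - Ψ v : ℝ) : EReal)) v).trans h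

theorem MeasureTheory.IntegrableOn.intervalIntegrable_of_mem_Icc {E : Type*}
    [NormedAddCommGroup E] {g : ℝ → E} {a b x : ℝ} (hg : IntegrableOn g (Ioc a b))
    (hx : x ∈ Icc a b) : IntervalIntegrable g volume a x :=
  (intervalIntegrable_iff_integrableOn_Ioc_of_le hx.1).2
    (hg.mono_set (Ioc_subset_Ioc_right hx.2))

theorem ContinuousOn.hasDerivWithinAt_integral_Ici {E : Type*} [NormedAddCommGroup E]
    [NormedSpace ℝ E] [CompleteSpace E] {f : ℝ → E} {a b x : ℝ}
    (hf : ContinuousOn f (Icc a b)) (hx : x ∈ Ico a b) :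
    HasDerivWithinAt (fun y => ∫ r in a..y, f r) (f x) (Ici x) x := by
  have hIcc : Icc a b ∈ 𝓝[>] x := Icc_mem_nhdsGT_of_mem hx
  exact intervalIntegral.integral_hasDerivWithinAt_right
    ((hf.mono (Icc_subset_Icc_right hx.2.le)).intervalIntegrable_of_Icc hx.1)
    ⟨_, hIcc, hf.aestronglyMeasurable measurableSet_Icc⟩
    ((hf x (Ico_subset_Icc_self hx)).mono_of_mem_nhdsWithin hIcc)

theorem continuousOn_primitive_of_integrableOn_Ioc {E : Type*} [NormedAddCommGroup E]
    [NormedSpace ℝ E] {g : ℝ → E} {a b : ℝ} (hg : IntegrableOn g (Ioc a b)) :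
    ContinuousOn (fun x => ∫ r in a..x, g r) (Icc a b) := by
  rcases le_or_gt a b with hab | hba
  · have := intervalIntegral.continuousOn_primitive_interval'
      ((intervalIntegrable_iff_integrableOn_Ioc_of_le hab).2 hg) left_mem_uIcc
    rwa [uIcc_of_le hab] at this
  · simp [Icc_eq_empty_of_lt hba]

theorem le_mul_exp_of_le_add_mul_integral {f : ℝ → ℝ} {a b C K : ℝ} (hK : 0 ≤ K)
    (hf : ContinuousOn f (Icc a b)) (h : ∀ x ∈ Icc a b, f x ≤ C + K * ∫ r in a..x, f r) :
    ∀ x ∈ Icc a b, f x ≤ C * Real.exp (K * (x - a)) := by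
  set F : ℝ → ℝ := fun x => C + K * ∫ r in a..x, f r
  have hFcont : ContinuousOn F (Icc a b) := continuousOn_const.add
    ((continuousOn_primitive_of_integrableOn_Ioc
      (hf.integrableOn_Icc.mono_set Ioc_subset_Icc_self)).const_smul K)
  have hFderiv : ∀ x ∈ Ico a b, HasDerivWithinAt F (K * f x) (Ici x) x := fun x hx =>
    ((hf.hasDerivWithinAt_integral_Ici hx).const_mul K).const_add C
  have hFa : F a ≤ C := by simp [F]
  have hFbound : ∀ x ∈ Ico a b, K * f x ≤ K * F x + 0 := fun x hx => by
    simpa using mul_le_mul_of_nonneg_left (h x (Ico_subset_Icc_self hx)) hK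
  intro x hx
  calc f x ≤ F x := h x hx
    _ ≤ gronwallBound C K 0 (x - a) := le_gronwallBound_of_liminf_deriv_right_le hFcont
        (fun x hx _ hr => (hFderiv x hx).liminf_right_slope_le hr) hFa hFbound x hx
    _ = C * Real.exp (K * (x - a)) := gronwallBound_ε0 ..

theorem eq_add_integral_sub_of_add_integral_eq {f p d : ℝ → ℝ} {a b : ℝ}
    (hp : IntegrableOn p (Ioc a b)) (hd : IntegrableOn d (Ioc a b))
    (h : ∀ x ∈ Icc a b, f x + ∫ r in a..x, d r = f a + ∫ r in a..x, p r) :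
    ∀ x ∈ Icc a b, f x = f a + ∫ r in a..x, (p r - d r) := by
  intro x hx
  rw [intervalIntegral.integral_sub (hp.intervalIntegrable_of_mem_Icc hx)
    (hd.intervalIntegrable_of_mem_Icc hx)]
  linarith [h x hx]

theorem le_mul_exp_of_eq_add_integral {f g : ℝ → ℝ} {a b K : ℝ} (hK : 0 ≤ K)
    (hg : IntegrableOn g (Ioc a b)) (hfg : ∀ x ∈ Icc a b, f x = f a + ∫ r in a..x, g r)
    (hgf : ∀ᵐ r ∂volume.restrict (Ioc a b), g r ≤ K * f r) :
    ∀ x ∈ Icc a b, f x ≤ f a * Real.exp (K * (x - a)) := by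
  have hf : ContinuousOn f (Icc a b) :=
    (continuousOn_const.add (continuousOn_primitive_of_integrableOn_Ioc hg)).congr hfg
  refine le_mul_exp_of_le_add_mul_integral hK hf fun x hx => ?_
  have hsub : Ioc a x ⊆ Ioc a b := Ioc_subset_Ioc_right hx.2
  rw [hfg x hx, ← intervalIntegral.integral_const_mul, intervalIntegral.integral_of_le hx.1,
    intervalIntegral.integral_of_le hx.1]
  exact add_le_add le_rfl <| setIntegral_mono_ae_restrict (hg.mono_set hsub)
    ((hf.integrableOn_Icc.mono_set
      (Ioc_subset_Icc_self.trans (Icc_subset_Icc_right hx.2))).const_mul K)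
    (ae_restrict_of_ae_restrict_of_subset hsub hgf)

theorem apriori_energy_bound_general
    (T : ℝ)
    (E : ℝ → V → ℝ) (D : Set V) (Edot : ℝ → V → ℝ)
    (CT CB : ℝ) (hCT : 0 < CT) (hCB : 0 < CB)
    (hEdot : ∀ u ∈ D, ∀ t ∈ Ioo (0:ℝ) T, |Edot t u| ≤ CT * E t u)
    (Ψ : V → V → ℝ)
    (hΨstar : ∀ (u : V) (ξ : StrongDual ℝ V), 0 ≤ conjFn (Ψ u) ξ)
    (B : ℝ → V → StrongDual ℝ V)
    (hB : ∀ t ∈ Icc (0:ℝ) T, ∀ u ∈ D, conjFn (Ψ u) (B t u) ≤ ((CB * E t u : ℝ) : EReal))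
    (u : ℝ → V) (u' : ℝ → V)
    (hD : ∀ t ∈ Icc (0:ℝ) T, u t ∈ D)
    (ξ : ℝ → StrongDual ℝ V)
    (hEdotint : IntegrableOn (fun r => Edot r (u r)) (Ioc 0 T))
    (q : ℝ → ℝ)
    (hq : ∀ᵐ r ∂(volume.restrict (Ioc 0 T)),
      conjFn (Ψ (u r)) (B r (u r) - ξ r) = ((q r : ℝ) : EReal))
    (hqint : IntegrableOn q (Ioc 0 T))
    (hΨint : IntegrableOn (fun r => Ψ (u r) (u' r)) (Ioc 0 T))
    (hpair : IntegrableOn (fun r => (B r (u r)) (u' r)) (Ioc 0 T))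
    (hEDB : ∀ s ∈ Icc (0:ℝ) T,
      E s (u s) + ∫ r in (0:ℝ)..s, (Ψ (u r) (u' r) + q r)
        = E 0 (u 0) + ∫ r in (0:ℝ)..s, (Edot r (u r) + (B r (u r)) (u' r))) :
    ∀ t ∈ Icc (0:ℝ) T, E t (u t) ≤ E 0 (u 0) * Real.exp ((CT + CB) * t) := by
  have hpower : ∀ᵐ r ∂volume.restrict (Ioc 0 T),
      (Edot r (u r) + B r (u r) (u' r)) - (Ψ (u r) (u' r) + q r) ≤ (CT + CB) * E r (u r) := by
    rw [← Measure.restrict_congr_set Ioo_ae_eq_Ioc] at hq ⊢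
    filter_upwards [hq, ae_restrict_mem measurableSet_Ioo] with r hqr hr
    have huD : u r ∈ D := hD r (Ioo_subset_Icc_self hr)
    have hEdot_le : Edot r (u r) ≤ CT * E r (u r) := (abs_le.1 (hEdot _ huD r hr)).2
    have hfenchel := sub_le_of_conjFn_le (hB r (Ioo_subset_Icc_self hr) _ huD) (u' r)
    have hq_nonneg : 0 ≤ q r := EReal.coe_nonneg.1 (hqr ▸ hΨstar _ _)
    linarith
  have hsupply := hEdotint.add hpair
  have hloss := hΨint.add hqint
  intro t ht
  simpa using le_mul_exp_of_eq_add_integral (add_nonneg hCT.le hCB.le) (hsupply.sub hloss)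
    (eq_add_integral_sub_of_add_integral_eq hsupply hloss hEDB) hpower t ht

/-- **A priori energy bound from the energy-dissipation balance** (Section 3.2 of the paper).
If the power is controlled by the energy (`|∂ₜ E_t(u)| ≤ C_T E_t(u)`), the perturbation is
controlled by the energy (`Ψ*_u(B(t,u)) ≤ C_B E_t(u)`), and the absolutely continuous curve
`u` with values in `D` satisfies the energy-dissipation balance with some selection `ξ`,
then `E_t(u(t)) ≤ E_0(u(0)) exp((C_T + C_B) t)` on `[0,T]`. -/
theorem apriori_energy_bound [CompleteSpace V]
    (T : ℝ) (hT : 0 < T)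
    (E : ℝ → V → ℝ) (D : Set V) (Edot : ℝ → V → ℝ)
    (CT CB : ℝ) (hCT : 0 < CT) (hCB : 0 < CB)
    (hpos : ∀ t ∈ Icc (0:ℝ) T, ∀ u ∈ D, 0 < E t u)
    (hEdiff : ∀ u ∈ D, ∀ t ∈ Ioo (0:ℝ) T, HasDerivAt (fun s => E s u) (Edot t u) t)
    (hEdot : ∀ u ∈ D, ∀ t ∈ Ioo (0:ℝ) T, |Edot t u| ≤ CT * E t u)
    (Ψ : V → V → ℝ)
    (hΨ : ∀ u : V, LowerSemicontinuous (Ψ u) ∧ ConvexOn ℝ univ (Ψ u) ∧ Ψ u 0 = 0 ∧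
      ∀ v : V, 0 ≤ Ψ u v)
    (hΨstar : ∀ (u : V) (ξ : StrongDual ℝ V), 0 ≤ conjFn (Ψ u) ξ)
    (B : ℝ → V → StrongDual ℝ V)
    (hB : ∀ t ∈ Icc (0:ℝ) T, ∀ u ∈ D, conjFn (Ψ u) (B t u) ≤ ((CB * E t u : ℝ) : EReal))
    (u : ℝ → V) (u' : ℝ → V)
    (hu'int : IntegrableOn u' (Ioc 0 T))
    (hAC : ∀ t ∈ Icc (0:ℝ) T, u t = u 0 + ∫ r in (0:ℝ)..t, u' r)
    (hD : ∀ t ∈ Icc (0:ℝ) T, u t ∈ D)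
    (ξ : ℝ → StrongDual ℝ V) (hξm : StronglyMeasurable ξ)
    (hEdotint : IntegrableOn (fun r => Edot r (u r)) (Ioc 0 T))
    (q : ℝ → ℝ)
    (hq : ∀ᵐ r ∂(volume.restrict (Ioc 0 T)),
      conjFn (Ψ (u r)) (B r (u r) - ξ r) = ((q r : ℝ) : EReal))
    (hqint : IntegrableOn q (Ioc 0 T))
    (hΨint : IntegrableOn (fun r => Ψ (u r) (u' r)) (Ioc 0 T))
    (hpair : IntegrableOn (fun r => (B r (u r)) (u' r)) (Ioc 0 T))
    (hEDB : ∀ s ∈ Icc (0:ℝ) T,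
      E s (u s) + ∫ r in (0:ℝ)..s, (Ψ (u r) (u' r) + q r)
        = E 0 (u 0) + ∫ r in (0:ℝ)..s, (Edot r (u r) + (B r (u r)) (u' r))) :
    ∀ t ∈ Icc (0:ℝ) T, E t (u t) ≤ E 0 (u 0) * Real.exp ((CT + CB) * t) :=
  apriori_energy_bound_general T E D Edot CT CB hCT hCB hEdot Ψ hΨstar B hB u u' hD ξ hEdotint q hq
    hqint hΨint hpair hEDB
end
end

section
/- (Liminf estimate for the dissipation integrals under strong Γ-convergence) Let V be a real Banach space, T > 0, K ⊂ V, g : [0,∞) → [0,∞) superlinear (g(s)/s → ∞ as s → ∞), and ω a modulus of continuity. For each ε ∈ [0,1] let Ψ^ε assign to each w ∈ V a lower semicontinuous convex functional Ψ^ε_w : V → [0,∞) with Ψ^ε_w(0) = 0, and assume: (uniform continuity) |Ψ^ε_{w₁}(v) − Ψ^ε_{w₂}(v)| ≤ ω(‖w₁−w₂‖)·g(‖v‖) for all ε ∈ [0,1], w₁, w₂ ∈ K and v ∈ V; (strong Γ-convergence) whenever ε_k → 0 and w_k → w with w_k, w ∈ K, the functionals Ψ^{ε_k}_{w_k} Γ-converge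 to Ψ⁰_w in the strong topology of V. Let ε_k → 0 and let u_k, u₀ ∈ W^{1,1}(0,T;V) take values in K and satisfy: (a) sup_{t∈[0,T]} ‖u_k(t) − u₀(t)‖ → 0 as k → ∞; (b) u'_k ⇀ u'₀ weakly in L¹(0,T;V); (c) ∫₀ᵀ g(‖u'_k(t)‖) dt ≤ C_g for all k. Then ∫₀ᵀ Ψ⁰_{u₀(t)}(u'₀(t)) dt ≤ liminf_{k→∞} ∫₀ᵀ Ψ^{ε_k}_{u_k(t)}(u'_k(t)) dt. -/
/-!
Discretize time by uniform grids of mesh `h → 0`. On a cell, the difference quotient of `u₀` is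
the cell average of `u₀'`; by Lebesgue differentiation these averages converge a.e. to `u₀'`, so
the Γ-liminf inequality for `ε = 0` and Fatou's lemma bound `∫ Ψ⁰_{u₀}(u₀')` by the liminf of the
discrete functionals `∫ Ψ⁰_{u₀(left endpoint)}(cell average of u₀')`.

On a fixed grid, the cell averages of `u_k'` are difference quotients of `u_k`, which converge to
those of `u₀` by uniform convergence. The Γ-liminf inequality at the frozen states
`u₀(left endpoint)`, Fatou in `k` and Jensen's inequality on each cell then bound the discrete
functional by `liminf_k ∫ Ψ^{ε_k}_{u₀(left endpoint)}(u_k')`. Finally the uniform continuity of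
`Ψ` in the state, together with `∫ g(‖u_k'‖) ≤ C_g`, replaces the frozen state by `u_k(t)` at a
cost `ω(θ) C_g`, which is arbitrarily small on fine grids.
-/

open MeasureTheory Filter Topology Set
open scoped ENNReal

noncomputable section

def gridIndex (h t : ℝ) : ℤ := ⌈t / h⌉ - 1

def gridLeft (h t : ℝ) : ℝ := gridIndex h t * h

section Grid

variable {h t : ℝ}

theorem gridIndex_eq_iff (hh : 0 < h) {j : ℤ} :
    gridIndex h t = j ↔ t ∈ Ioc (j * h) (j * h + h) := by
  rw [gridIndex, sub_eq_iff_eq_add, Int.ceil_eq_iff, mem_Ioc, lt_div_iff₀ hh, div_le_iff₀ hh]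
  push_cast
  ring_nf

theorem mem_Ioc_gridLeft (hh : 0 < h) (t : ℝ) : t ∈ Ioc (gridLeft h t) (gridLeft h t + h) :=
  (gridIndex_eq_iff hh).1 rfl

theorem gridLeft_nonneg (hh : 0 < h) (ht : 0 < t) : 0 ≤ gridLeft h t := by
  have : 0 ≤ gridIndex h t := by
    have := Int.ceil_pos.2 (div_pos ht hh)
    unfold gridIndex
    omega
  exact mul_nonneg (by exact_mod_cast this) hh.le

theorem gridLeft_add_le (hh : 0 < h) {N : ℕ} (ht : t ≤ N * h) : gridLeft h t + h ≤ N * h := by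
  have : gridIndex h t + 1 ≤ N := by
    have : ⌈t / h⌉ ≤ N := Int.ceil_le.2 (by exact_mod_cast (div_le_iff₀ hh).2 ht)
    unfold gridIndex
    omega
  have : (gridIndex h t : ℝ) + 1 ≤ N := by exact_mod_cast this
  unfold gridLeft
  nlinarith

theorem gridLeft_mem_Icc (hh : 0 < h) {T : ℝ} (ht : t ∈ Ioc 0 T) : gridLeft h t ∈ Icc 0 T :=
  ⟨gridLeft_nonneg hh ht.1, (mem_Ioc_gridLeft hh t).1.le.trans ht.2⟩

theorem Ioc_gridLeft_subset (hh : 0 < h) {N : ℕ} (ht : t ∈ Ioc 0 (N * h)) :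
    Ioc (gridLeft h t) (gridLeft h t + h) ⊆ Ioc 0 (N * h) :=
  Ioc_subset_Ioc (gridLeft_nonneg hh ht.1) (gridLeft_add_le hh ht.2)

theorem dist_gridLeft_le (hh : 0 < h) (t : ℝ) : dist (gridLeft h t) t ≤ h := by
  obtain ⟨h₁, h₂⟩ := mem_Ioc_gridLeft hh t
  rw [Real.dist_eq, abs_sub_le_iff]
  constructor <;> linarith

theorem tendsto_gridLeft {ι : Type*} {l : Filter ι} {h : ι → ℝ} (hpos : ∀ i, 0 < h i)
    (hlim : Tendsto h l (𝓝 0)) (t : ℝ) : Tendsto (fun i => gridLeft (h i) t) l (𝓝 t) :=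
  tendsto_iff_dist_tendsto_zero.2
    (squeeze_zero (fun _ => dist_nonneg) (fun i => dist_gridLeft_le (hpos i) t) hlim)

theorem measurable_gridIndex (h : ℝ) : Measurable (gridIndex h) :=
  (Int.measurable_ceil.comp (measurable_id.div_const h)).sub_const 1

theorem exists_mesh_seq {T : ℝ} (hT : 0 < T) : ∃ (N : ℕ → ℕ) (h : ℕ → ℝ),
    (∀ n, 0 < h n) ∧ Tendsto h atTop (𝓝 0) ∧ ∀ n, T = N n * h n :=
  ⟨fun n => n + 1, fun n => T / (n + 1), fun n => by positivity,
    by simpa [div_eq_mul_inv] using tendsto_one_div_add_atTop_nhds_zero_nat.const_mul T,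
    fun n => by push_cast; field_simp⟩

end Grid

section CellAverage

variable {E : Type*} [NormedAddCommGroup E] [NormedSpace ℝ E]

def cellAverage (h : ℝ) (f : ℝ → E) (t : ℝ) : E :=
  ⨍ s in Ioc (gridLeft h t) (gridLeft h t + h), f s

theorem measurable_gridIndex_cellAverage {β : Type*} [MeasurableSpace β] (G : ℤ → E → β)
    (h : ℝ) (f : ℝ → E) : Measurable fun t => G (gridIndex h t) (cellAverage h f t) :=
  (measurable_of_countable fun j : ℤ => G j (⨍ s in Ioc (j * h) (j * h + h), f s)).comp
    (measurable_gridIndex h)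

theorem ConvexOn.measure_mul_ofReal_map_setAverage_le {α : Type*} [MeasurableSpace α]
    [CompleteSpace E] [MeasurableSpace E] [BorelSpace E] {φ : E → ℝ}
    (hφ : ConvexOn ℝ univ φ) (hφc : LowerSemicontinuous φ) (hφ0 : 0 ≤ φ)
    {μ : Measure α} {s : Set α} {f : α → E} (hs : μ s ≠ ∞) (hf : IntegrableOn f s μ) :
    μ s * ENNReal.ofReal (φ (⨍ x in s, f x ∂μ)) ≤ ∫⁻ x in s, ENNReal.ofReal (φ (f x)) ∂μ := by
  rcases eq_or_ne (μ s) 0 with h0 | h0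
  · simp [h0]
  rcases eq_or_ne (∫⁻ x in s, ENNReal.ofReal (φ (f x)) ∂μ) ∞ with hfin | hfin
  · simp [hfin]
  have hφf : IntegrableOn (fun x => φ (f x)) s μ :=
    ⟨(hφc.measurable.comp_aemeasurable hf.aemeasurable).aestronglyMeasurable,
      (hasFiniteIntegral_iff_ofReal (ae_of_all _ fun x => hφ0 (f x))).2 hfin.lt_top⟩
  have hepi : IsClosed {p : E × ℝ | p.1 ∈ univ ∧ φ p.1 ≤ p.2} := by
    simpa using hφc.isClosed_epigraph
  have hjensen := hφ.convex_epigraph.set_average_mem hepi h0 hs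
    (ae_of_all _ fun x => ⟨trivial, le_rfl⟩) (hf.prodMk hφf)
  rw [average_pair hf hφf] at hjensen
  rw [← ofReal_integral_eq_lintegral_ofReal hφf (ae_of_all _ fun x => hφ0 (f x)),
    ← measure_smul_setAverage _ hs, smul_eq_mul, ← ofReal_measureReal hs,
    ← ENNReal.ofReal_mul measureReal_nonneg]
  exact ENNReal.ofReal_le_ofReal (mul_le_mul_of_nonneg_left hjensen.2 measureReal_nonneg)

theorem setLIntegral_cellAverage_le [CompleteSpace E] [MeasurableSpace E] [BorelSpace E]
    {Φ : ℤ → E → ℝ} (hΦ : ∀ j, ConvexOn ℝ univ (Φ j)) (hΦc : ∀ j, LowerSemicontinuous (Φ j))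
    (hΦ0 : ∀ j, 0 ≤ Φ j) {h : ℝ} (hh : 0 < h) (N : ℕ) {f : ℝ → E}
    (hf : IntegrableOn f (Ioc 0 (N * h))) :
    ∫⁻ t in Ioc 0 (N * h), ENNReal.ofReal (Φ (gridIndex h t) (cellAverage h f t))
      ≤ ∫⁻ t in Ioc 0 (N * h), ENNReal.ofReal (Φ (gridIndex h t) (f t)) := by
  induction N with
  | zero => simp
  | succ N ih =>
    set c : ℝ := ((N : ℤ) : ℝ) * h
    have hsplit : Ioc 0 ((N + 1 : ℕ) * h) = Ioc 0 (N * h) ∪ Ioc c (c + h) := by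
      rw [show c = N * h by simp [c], Ioc_union_Ioc_eq_Ioc (by positivity) (by linarith)]
      push_cast
      ring_nf
    have hdisj : Disjoint (Ioc 0 (N * h)) (Ioc c (c + h)) :=
      Ioc_disjoint_Ioc_of_le (by simp [c])
    have hidx : ∀ t ∈ Ioc c (c + h), gridIndex h t = N := fun t ht =>
      (gridIndex_eq_iff hh).2 ht
    have hL : ∫⁻ t in Ioc c (c + h), ENNReal.ofReal (Φ (gridIndex h t) (cellAverage h f t))
        = ∫⁻ t in Ioc c (c + h), ENNReal.ofReal (Φ N (⨍ s in Ioc c (c + h), f s)) :=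
      setLIntegral_congr_fun measurableSet_Ioc fun t ht => by
        rw [cellAverage, gridLeft, hidx t ht]
    have hR : ∫⁻ t in Ioc c (c + h), ENNReal.ofReal (Φ (gridIndex h t) (f t))
        = ∫⁻ t in Ioc c (c + h), ENNReal.ofReal (Φ N (f t)) :=
      setLIntegral_congr_fun measurableSet_Ioc fun t ht => by rw [hidx t ht]
    rw [hsplit] at hf ⊢
    rw [lintegral_union measurableSet_Ioc hdisj, lintegral_union measurableSet_Ioc hdisj]
    refine add_le_add (ih (hf.mono_set subset_union_left)) ?_
    rw [hL, hR, setLIntegral_const, mul_comm]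
    exact (hΦ N).measure_mul_ofReal_map_setAverage_le (hΦc N) (hΦ0 N) (by simp)
      (hf.mono_set subset_union_right)

theorem ae_tendsto_cellAverage [CompleteSpace E] {f : ℝ → E} (hf : LocallyIntegrable f)
    {ι : Type*} {l : Filter ι} {h : ι → ℝ} (hpos : ∀ i, 0 < h i) (hlim : Tendsto h l (𝓝 0)) :
    ∀ᵐ t, Tendsto (fun i => cellAverage (h i) f t) l (𝓝 (f t)) := by
  filter_upwards [IsUnifLocDoublingMeasure.ae_tendsto_average volume hf 1] with t ht
  have hrad : Tendsto (fun i => h i / 2) l (𝓝[>] 0) :=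
    tendsto_nhdsWithin_iff.2 ⟨by simpa using hlim.div_const 2,
      Eventually.of_forall fun i => half_pos (hpos i)⟩
  have hball : ∀ i, Metric.closedBall (gridLeft (h i) t + h i / 2) (h i / 2)
      = Icc (gridLeft (h i) t) (gridLeft (h i) t + h i) := fun i => by
    rw [Real.closedBall_eq_Icc]
    ring_nf
  refine (ht (fun i => gridLeft (h i) t + h i / 2) _ hrad
    (Eventually.of_forall fun i => ?_)).congr fun i => ?_
  · rw [one_mul, hball]
    exact Ioc_subset_Icc_self (mem_Ioc_gridLeft (hpos i) t)
  · rw [hball, cellAverage, setAverage_congr Ioc_ae_eq_Icc]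

theorem ae_restrict_tendsto_cellAverage [CompleteSpace E] {f : ℝ → E} {N : ℕ → ℕ}
    {h : ℕ → ℝ} {T : ℝ} (hf : IntegrableOn f (Ioc 0 T)) (hpos : ∀ n, 0 < h n)
    (hlim : Tendsto h atTop (𝓝 0)) (hT : ∀ n, T = N n * h n) :
    ∀ᵐ t ∂volume.restrict (Ioc 0 T),
      Tendsto (fun n => cellAverage (h n) f t) atTop (𝓝 (f t)) := by
  have hfS : LocallyIntegrable ((Ioc 0 T).indicator f) :=
    ((integrable_indicator_iff measurableSet_Ioc).2 hf).locallyIntegrable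
  filter_upwards [ae_restrict_of_ae (ae_tendsto_cellAverage hfS hpos hlim),
    ae_restrict_mem measurableSet_Ioc] with t ht htS
  rw [indicator_of_mem htS] at ht
  refine ht.congr fun n => setAverage_congr_fun measurableSet_Ioc (ae_of_all _ fun s hs => ?_)
  rw [hT n] at htS ⊢
  exact indicator_of_mem (Ioc_gridLeft_subset (hpos n) htS hs) f

def HasW11Deriv (u u' : ℝ → E) (T : ℝ) : Prop :=
  IntegrableOn u' (Ioc 0 T) ∧ ∀ t ∈ Icc (0:ℝ) T, u t = u 0 + ∫ r in (0:ℝ)..t, u' r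

namespace HasW11Deriv

variable {u u' : ℝ → E} {T : ℝ}

theorem sub_eq_setIntegral (hu : HasW11Deriv u u' T) {a b : ℝ} (ha : 0 ≤ a) (hab : a ≤ b)
    (hb : b ≤ T) : u b - u a = ∫ t in Ioc a b, u' t := by
  have hint : ∀ x, 0 ≤ x → x ≤ T → IntervalIntegrable u' volume 0 x := fun x hx hxT =>
    (intervalIntegrable_iff_integrableOn_Ioc_of_le hx).2
      (hu.1.mono_set (Ioc_subset_Ioc le_rfl hxT))
  rw [hu.2 b ⟨ha.trans hab, hb⟩, hu.2 a ⟨ha, hab.trans hb⟩, add_sub_add_left_eq_sub,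
    intervalIntegral.integral_interval_sub_left (hint b (ha.trans hab) hb)
      (hint a ha (hab.trans hb)),
    intervalIntegral.integral_of_le hab]

theorem continuousOn (hu : HasW11Deriv u u' T) : ContinuousOn u (Icc 0 T) := by
  have hIcc : IntegrableOn u' (Icc 0 T) := by
    rw [integrableOn_Icc_iff_integrableOn_Ioc]
    exact hu.1
  refine ((continuousOn_const (c := u 0)).add
    (intervalIntegral.continuousOn_primitive hIcc)).congr fun t ht => ?_
  rw [hu.2 t ht, intervalIntegral.integral_of_le ht.1, Pi.add_apply]

theorem cellAverage_eq (hu : HasW11Deriv u u' T) {h t : ℝ} (hh : 0 < h) {N : ℕ}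
    (hT : T = N * h) (ht : t ∈ Ioc 0 T) :
    cellAverage h u' t = h⁻¹ • (u (gridLeft h t + h) - u (gridLeft h t)) := by
  subst hT
  rw [hu.sub_eq_setIntegral (gridLeft_nonneg hh ht.1) (by linarith) (gridLeft_add_le hh ht.2),
    cellAverage, setAverage_eq, Real.volume_real_Ioc_of_le (by linarith), add_sub_cancel_left]

theorem tendsto_cellAverage {uk u'k : ℕ → ℝ → E} (huk : ∀ k, HasW11Deriv (uk k) (u'k k) T)
    (hu : HasW11Deriv u u' T) (hlim : ∀ t ∈ Icc 0 T, Tendsto (uk · t) atTop (𝓝 (u t)))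
    {h t : ℝ} (hh : 0 < h) {N : ℕ} (hT : T = N * h) (ht : t ∈ Ioc 0 T) :
    Tendsto (fun k => cellAverage h (u'k k) t) atTop (𝓝 (cellAverage h u' t)) := by
  have h₀ := gridLeft_nonneg hh ht.1
  have h₁ := gridLeft_add_le hh (hT ▸ ht.2)
  simp only [fun k => (huk k).cellAverage_eq hh hT ht, hu.cellAverage_eq hh hT ht]
  refine ((hlim _ ⟨?_, ?_⟩).sub (hlim _ ⟨h₀, ?_⟩)).const_smul _ <;> linarith

end HasW11Deriv

end CellAverage

section Gamma

variable {E : Type*} [TopologicalSpace E]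

def GammaLiminf (Φ : ℕ → E → ℝ) (φ : E → ℝ) : Prop :=
  ∀ (v : E) (vk : ℕ → E), Tendsto vk atTop (𝓝 v) →
    (φ v : EReal) ≤ liminf (fun k => (Φ k (vk k) : EReal)) atTop

theorem GammaLiminf.ofReal_le_liminf {Φ : ℕ → E → ℝ} {φ : E → ℝ} (hΓ : GammaLiminf Φ φ)
    {v : E} {vk : ℕ → E} (hv : Tendsto vk atTop (𝓝 v)) :
    ENNReal.ofReal (φ v) ≤ liminf (fun k => ENNReal.ofReal (Φ k (vk k))) atTop := by
  have hmono : Monotone EReal.toENNReal := fun _ _ h => EReal.toENNReal_le_toENNReal h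
  calc ENNReal.ofReal (φ v) = (φ v : EReal).toENNReal := rfl
    _ ≤ (liminf (fun k => (Φ k (vk k) : EReal)) atTop).toENNReal := hmono (hΓ v vk hv)
    _ = liminf (fun k => ENNReal.ofReal (Φ k (vk k))) atTop :=
      hmono.map_liminf_of_continuousAt _ EReal.continuous_toENNReal.continuousAt

end Gamma

section LowerBounds

variable {E : Type*} [NormedAddCommGroup E] [NormedSpace ℝ E] [CompleteSpace E]

theorem HasW11Deriv.lintegral_le_liminf_lintegral_cellAverage {φ : E → E → ℝ} {K : Set E}
    (hΓ : ∀ (w : ℕ → E) (x : E), (∀ n, w n ∈ K) → x ∈ K → Tendsto w atTop (𝓝 x) →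
      GammaLiminf (fun n => φ (w n)) (φ x))
    {u u' : ℝ → E} {T : ℝ} (hu : HasW11Deriv u u' T) (huK : MapsTo u (Icc 0 T) K)
    {N : ℕ → ℕ} {h : ℕ → ℝ} (hpos : ∀ n, 0 < h n) (hlim : Tendsto h atTop (𝓝 0))
    (hT : ∀ n, T = N n * h n) :
    ∫⁻ t in Ioc 0 T, ENNReal.ofReal (φ (u t) (u' t))
      ≤ liminf (fun n => ∫⁻ t in Ioc 0 T,
          ENNReal.ofReal (φ (u (gridLeft (h n) t)) (cellAverage (h n) u' t))) atTop := by
  refine (lintegral_mono_ae ?_).trans (lintegral_liminf_le fun n =>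
    measurable_gridIndex_cellAverage (fun j v => ENNReal.ofReal (φ (u (j * h n)) v)) (h n) u')
  filter_upwards [ae_restrict_tendsto_cellAverage hu.1 hpos hlim hT,
    ae_restrict_mem measurableSet_Ioc] with t ht htS
  have hleft : Tendsto (fun n => gridLeft (h n) t) atTop (𝓝[Icc 0 T] t) :=
    tendsto_nhdsWithin_iff.2 ⟨tendsto_gridLeft hpos hlim t,
      Eventually.of_forall fun n => gridLeft_mem_Icc (hpos n) htS⟩
  have hΓt := hΓ _ _ (fun n => huK (gridLeft_mem_Icc (hpos n) htS))
    (huK (Ioc_subset_Icc_self htS))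
    ((hu.continuousOn t (Ioc_subset_Icc_self htS)).tendsto.comp hleft)
  exact hΓt.ofReal_le_liminf ht

theorem HasW11Deriv.setLIntegral_cellAverage_le_liminf [MeasurableSpace E] [BorelSpace E]
    {Φ : ℕ → E → E → ℝ} {φ : E → E → ℝ} {K : Set E}
    (hΦ : ∀ k w, ConvexOn ℝ univ (Φ k w)) (hΦc : ∀ k w, LowerSemicontinuous (Φ k w))
    (hΦ0 : ∀ k w, 0 ≤ Φ k w) (hΓ : ∀ x ∈ K, GammaLiminf (fun k => Φ k x) (φ x))
    {uk u'k : ℕ → ℝ → E} {u u' : ℝ → E} {T : ℝ} (huk : ∀ k, HasW11Deriv (uk k) (u'k k) T)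
    (hu : HasW11Deriv u u' T) (hlim : ∀ t ∈ Icc 0 T, Tendsto (uk · t) atTop (𝓝 (u t)))
    (huK : MapsTo u (Icc 0 T) K) {h : ℝ} (hh : 0 < h) {N : ℕ} (hT : T = N * h) :
    ∫⁻ t in Ioc 0 T, ENNReal.ofReal (φ (u (gridLeft h t)) (cellAverage h u' t))
      ≤ liminf (fun k => ∫⁻ t in Ioc 0 T,
          ENNReal.ofReal (Φ k (u (gridLeft h t)) (u'k k t))) atTop := by
  calc _ ≤ ∫⁻ t in Ioc 0 T, liminf (fun k =>
        ENNReal.ofReal (Φ k (u (gridLeft h t)) (cellAverage h (u'k k) t))) atTop :=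
      setLIntegral_mono' measurableSet_Ioc fun t ht =>
        (hΓ _ (huK (gridLeft_mem_Icc hh ht))).ofReal_le_liminf
          (tendsto_cellAverage huk hu hlim hh hT ht)
    _ ≤ liminf (fun k => ∫⁻ t in Ioc 0 T,
          ENNReal.ofReal (Φ k (u (gridLeft h t)) (cellAverage h (u'k k) t))) atTop :=
      lintegral_liminf_le fun k => measurable_gridIndex_cellAverage
        (fun j v => ENNReal.ofReal (Φ k (u (j * h)) v)) h (u'k k)
    _ ≤ _ := by
      subst hT
      exact liminf_le_liminf (Eventually.of_forall fun k =>
        setLIntegral_cellAverage_le (Φ := fun j => Φ k (u (j * h))) (fun _ => hΦ _ _)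
          (fun _ => hΦc _ _) (fun _ => hΦ0 _ _) hh N (huk k).1)

end LowerBounds

section StateDependence

variable {E : Type*} [NormedAddCommGroup E]

-- The approximants `Φ (gridLeft hₘ t) t` depend on `t` only through the countable grid index.
theorem aemeasurable_diag_of_continuousOn {Φ : ℝ → ℝ → ℝ} {T : ℝ}
    (hm : ∀ s, Measurable (Φ s)) (hc : ∀ t, ContinuousOn (Φ · t) (Icc 0 T)) :
    AEMeasurable (fun t => Φ t t) (volume.restrict (Ioc 0 T)) := by
  have hpos : ∀ m : ℕ, (0 : ℝ) < 1 / (m + 1) := fun m => by positivity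
  refine aemeasurable_of_tendsto_metrizable_ae'
    (f := fun m t => Φ (gridLeft (1 / (m + 1)) t) t) (fun m => ?_) ?_
  · exact ((measurable_from_prod_countable_right
      (f := fun p : ℤ × ℝ => Φ (p.1 * (1 / (m + 1))) p.2) fun j => hm (j * (1 / (m + 1)))).comp
      ((measurable_gridIndex _).prodMk measurable_id)).aemeasurable
  · filter_upwards [ae_restrict_mem measurableSet_Ioc] with t ht
    exact (hc t t (Ioc_subset_Icc_self ht)).tendsto.comp (tendsto_nhdsWithin_iff.2
      ⟨tendsto_gridLeft hpos tendsto_one_div_add_atTop_nhds_zero_nat t,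
        Eventually.of_forall fun m => gridLeft_mem_Icc (hpos m) ht⟩)

theorem aemeasurable_comp_of_continuousOn [MeasurableSpace E] [OpensMeasurableSpace E]
    {Φ : E → E → ℝ} {K : Set E} (hm : ∀ w, Measurable (Φ w))
    (hc : ∀ v, ContinuousOn (Φ · v) K) {u u' : ℝ → E} {T : ℝ} (hu : ContinuousOn u (Icc 0 T))
    (huK : MapsTo u (Icc 0 T) K) (hu' : AEMeasurable u' (volume.restrict (Ioc 0 T))) :
    AEMeasurable (fun t => Φ (u t) (u' t)) (volume.restrict (Ioc 0 T)) :=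
  (aemeasurable_diag_of_continuousOn (Φ := fun s t => Φ (u s) (hu'.mk u' t))
    (fun s => (hm _).comp hu'.measurable_mk) (fun t => (hc _).comp hu huK)).congr
    (hu'.ae_eq_mk.mono fun t ht => by simp only [ht])

theorem continuousOn_of_abs_sub_le {f : E → ℝ} {K : Set E} {ω : ℝ → ℝ}
    (hω : ContinuousAt ω 0) (hω0 : ω 0 = 0) {C : ℝ}
    (hf : ∀ x ∈ K, ∀ y ∈ K, |f x - f y| ≤ ω ‖x - y‖ * C) : ContinuousOn f K := by
  intro x hx
  have hdist : Tendsto (fun y => ‖y - x‖) (𝓝[K] x) (𝓝 0) :=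
    (tendsto_iff_norm_sub_tendsto_zero.1 tendsto_id).mono_left nhdsWithin_le_nhds
  have hbound : Tendsto (fun y => ω ‖y - x‖ * C) (𝓝[K] x) (𝓝 0) := by
    simpa [hω0] using (hω.tendsto.comp hdist).mul_const C
  exact tendsto_iff_norm_sub_tendsto_zero.2 (squeeze_zero'
    (Eventually.of_forall fun _ => norm_nonneg _)
    (eventually_nhdsWithin_of_forall fun y hy => hf y hy x hx) hbound)

theorem exists_pos_ofReal_mul_lt {ω : ℝ → ℝ} (hω : ContinuousAt ω 0) (hω0 : ω 0 = 0)
    {C : ℝ≥0∞} (hC : C ≠ ∞) {ρ : ℝ≥0∞} (hρ : 0 < ρ) :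
    ∃ θ > 0, ENNReal.ofReal (ω θ) * C < ρ := by
  have hlim : Tendsto (fun θ => ENNReal.ofReal (ω θ) * C) (𝓝[>] 0) (𝓝 0) := by
    have := ENNReal.Tendsto.mul_const ((ENNReal.continuous_ofReal.tendsto _).comp
      (hω.tendsto.mono_left (nhdsWithin_le_nhds (s := Ioi 0)))) (Or.inr hC)
    simpa [hω0] using this
  exact ((hlim.eventually (gt_mem_nhds hρ)).and self_mem_nhdsWithin).exists.imp
    fun θ h => ⟨h.2, h.1⟩

theorem eventually_norm_gridLeft_sub_le {u : ℕ → ℝ → E} {u₀ : ℝ → E} {T : ℝ}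
    (hu₀ : ContinuousOn u₀ (Icc 0 T)) (hu : TendstoUniformlyOn u u₀ atTop (Icc 0 T))
    {h : ℕ → ℝ} (hpos : ∀ n, 0 < h n) (hlim : Tendsto h atTop (𝓝 0)) {θ : ℝ} (hθ : 0 < θ) :
    ∀ᶠ n in atTop, ∀ᶠ k in atTop, ∀ t ∈ Ioc 0 T, ‖u₀ (gridLeft (h n) t) - u k t‖ ≤ θ := by
  obtain ⟨δ, hδ, hu₀δ⟩ := Metric.uniformContinuousOn_iff.1
    (isCompact_Icc.uniformContinuousOn_of_continuous hu₀) (θ / 2) (half_pos hθ)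
  filter_upwards [hlim.eventually (gt_mem_nhds hδ)] with n hn
  filter_upwards [Metric.tendstoUniformlyOn_iff.1 hu (θ / 2) (half_pos hθ)] with k hk t ht
  have h₁ := hu₀δ _ (gridLeft_mem_Icc (hpos n) ht) t (Ioc_subset_Icc_self ht)
    ((dist_gridLeft_le (hpos n) t).trans_lt hn)
  have h₂ := hk t (Ioc_subset_Icc_self ht)
  rw [← dist_eq_norm]
  linarith [dist_triangle (u₀ (gridLeft (h n) t)) (u₀ t) (u k t)]

theorem setLIntegral_le_add_of_abs_sub_le {α : Type*} [MeasurableSpace α] {μ : Measure α}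
    {s : Set α} (hs : MeasurableSet s) {Φ : E → E → ℝ} {K : Set E} {ω g : ℝ → ℝ}
    (hg : ∀ r, 0 ≤ g r) (hω : Monotone ω)
    (hΦ : ∀ w₁ ∈ K, ∀ w₂ ∈ K, ∀ v, |Φ w₁ v - Φ w₂ v| ≤ ω ‖w₁ - w₂‖ * g ‖v‖)
    {w₁ w₂ f : α → E} {θ : ℝ} (hK₁ : ∀ x ∈ s, w₁ x ∈ K) (hK₂ : ∀ x ∈ s, w₂ x ∈ K)
    (hclose : ∀ x ∈ s, ‖w₁ x - w₂ x‖ ≤ θ)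
    (hmeas : AEMeasurable (fun x => Φ (w₂ x) (f x)) (μ.restrict s)) :
    ∫⁻ x in s, ENNReal.ofReal (Φ (w₁ x) (f x)) ∂μ
      ≤ ∫⁻ x in s, ENNReal.ofReal (Φ (w₂ x) (f x)) ∂μ
        + ENNReal.ofReal (ω θ) * ∫⁻ x in s, ENNReal.ofReal (g ‖f x‖) ∂μ := by
  have hpt : ∀ x ∈ s, ENNReal.ofReal (Φ (w₁ x) (f x))
      ≤ ENNReal.ofReal (Φ (w₂ x) (f x)) + ENNReal.ofReal (ω θ) * ENNReal.ofReal (g ‖f x‖) := by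
    intro x hx
    have h₁ := (le_abs_self _).trans (hΦ _ (hK₁ x hx) _ (hK₂ x hx) (f x))
    have h₂ := mul_le_mul_of_nonneg_right (hω (hclose x hx)) (hg ‖f x‖)
    rw [← ENNReal.ofReal_mul' (hg _)]
    exact (ENNReal.ofReal_le_ofReal (by linarith)).trans ENNReal.ofReal_add_le
  refine (setLIntegral_mono' hs hpt).trans_eq ?_
  rw [lintegral_add_left' hmeas.ennreal_ofReal, lintegral_const_mul' _ _ ENNReal.ofReal_ne_top]

end StateDependence

variable {V : Type*} [NormedAddCommGroup V] [NormedSpace ℝ V]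

theorem liminf_dissipation_of_strong_gamma_general [CompleteSpace V]
    (T : ℝ) (hT : 0 < T) (K : Set V)
    (g : ℝ → ℝ) (hg0 : ∀ s, 0 ≤ g s)
    (ω : ℝ → ℝ) (hωcont : Continuous ω) (hωmono : Monotone ω) (hω0 : ω 0 = 0)
    (Ψ : ℝ → V → V → ℝ)
    (hΨ : ∀ ε ∈ Icc (0:ℝ) 1, ∀ w : V, LowerSemicontinuous (Ψ ε w) ∧
      ConvexOn ℝ univ (Ψ ε w) ∧ Ψ ε w 0 = 0 ∧ ∀ v : V, 0 ≤ Ψ ε w v)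
    (hunif : ∀ ε ∈ Icc (0:ℝ) 1, ∀ w₁ ∈ K, ∀ w₂ ∈ K, ∀ v : V,
      |Ψ ε w₁ v - Ψ ε w₂ v| ≤ ω ‖w₁ - w₂‖ * g ‖v‖)
    (hgamma : ∀ (εk : ℕ → ℝ) (wk : ℕ → V) (w : V),
      (∀ k, εk k ∈ Icc (0:ℝ) 1) → Tendsto εk atTop (𝓝 0) →
      (∀ k, wk k ∈ K) → w ∈ K → Tendsto wk atTop (𝓝 w) →
      (∀ (v : V) (vk : ℕ → V), Tendsto vk atTop (𝓝 v) →
        ((Ψ 0 w v : ℝ) : EReal) ≤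
          Filter.liminf (fun k => ((Ψ (εk k) (wk k) (vk k) : ℝ) : EReal)) atTop)
      ∧ ∀ v : V, ∃ vk : ℕ → V, Tendsto vk atTop (𝓝 v) ∧
          Tendsto (fun k => Ψ (εk k) (wk k) (vk k)) atTop (𝓝 (Ψ 0 w v)))
    (εk : ℕ → ℝ) (hεk : ∀ k, εk k ∈ Icc (0:ℝ) 1) (hεk0 : Tendsto εk atTop (𝓝 0))
    (uk : ℕ → ℝ → V) (u'k : ℕ → ℝ → V) (u0 : ℝ → V) (u'0 : ℝ → V)
    (hW11k : ∀ k, IntegrableOn (u'k k) (Ioc 0 T) ∧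
      ∀ t ∈ Icc (0:ℝ) T, uk k t = uk k 0 + ∫ r in (0:ℝ)..t, u'k k r)
    (hW110 : IntegrableOn u'0 (Ioc 0 T) ∧
      ∀ t ∈ Icc (0:ℝ) T, u0 t = u0 0 + ∫ r in (0:ℝ)..t, u'0 r)
    (hKk : ∀ k, ∀ t ∈ Icc (0:ℝ) T, uk k t ∈ K) (hK0 : ∀ t ∈ Icc (0:ℝ) T, u0 t ∈ K)
    (ha : TendstoUniformlyOn (fun k t => uk k t) u0 atTop (Icc (0:ℝ) T))
    (Cg : ℝ)
    (hc : ∀ k, ∫⁻ t in Ioc (0:ℝ) T, ENNReal.ofReal (g ‖u'k k t‖) ≤ ENNReal.ofReal Cg) :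
    ∫⁻ t in Ioc (0:ℝ) T, ENNReal.ofReal (Ψ 0 (u0 t) (u'0 t))
      ≤ Filter.liminf
          (fun k => ∫⁻ t in Ioc (0:ℝ) T, ENNReal.ofReal (Ψ (εk k) (uk k t) (u'k k t)))
          atTop := by
  let _ : MeasurableSpace V := borel V
  have _ : BorelSpace V := ⟨rfl⟩
  obtain ⟨N, h, hpos, hlim, hTN⟩ := exists_mesh_seq hT
  have hmeas : ∀ k, AEMeasurable (fun t => Ψ (εk k) (uk k t) (u'k k t))
      (volume.restrict (Ioc 0 T)) := fun k =>
    aemeasurable_comp_of_continuousOn (fun w => (hΨ _ (hεk k) w).1.measurable)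
      (fun v => continuousOn_of_abs_sub_le hωcont.continuousAt hω0
        fun x hx y hy => hunif _ (hεk k) x hx y hy v)
      (HasW11Deriv.continuousOn (hW11k k)) (hKk k) (hW11k k).1.aemeasurable
  refine (HasW11Deriv.lintegral_le_liminf_lintegral_cellAverage
    (fun w x hw hx hwx => (hgamma (fun _ => 0) w x (fun _ => ⟨le_rfl, zero_le_one⟩)
      tendsto_const_nhds hw hx hwx).1) hW110 hK0 hpos hlim hTN).trans
    (ENNReal.le_of_forall_pos_le_add fun ρ hρ _ => ?_)
  obtain ⟨θ, hθ, hθρ⟩ := exists_pos_ofReal_mul_lt hωcont.continuousAt hω0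
    (C := ENNReal.ofReal Cg) ENNReal.ofReal_ne_top (ENNReal.coe_pos.2 hρ)
  refine liminf_le_of_frequently_le ((eventually_norm_gridLeft_sub_le
    (HasW11Deriv.continuousOn hW110) ha hpos hlim hθ).mono fun n hn => ?_).frequently
  calc _ ≤ liminf (fun k => ∫⁻ t in Ioc 0 T,
        ENNReal.ofReal (Ψ (εk k) (u0 (gridLeft (h n) t)) (u'k k t))) atTop :=
      HasW11Deriv.setLIntegral_cellAverage_le_liminf (fun k w => (hΨ _ (hεk k) w).2.1)
        (fun k w => (hΨ _ (hεk k) w).1) (fun k w => (hΨ _ (hεk k) w).2.2.2)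
        (fun x hx => (hgamma εk _ x hεk hεk0 (fun _ => hx) hx tendsto_const_nhds).1)
        hW11k hW110 (fun t ht => ha.tendsto_at ht) hK0 (hpos n) (hTN n)
    _ ≤ liminf (fun k => (∫⁻ t in Ioc 0 T, ENNReal.ofReal (Ψ (εk k) (uk k t) (u'k k t)))
          + ENNReal.ofReal (ω θ) * ENNReal.ofReal Cg) atTop :=
      liminf_le_liminf (hn.mono fun k hk => (setLIntegral_le_add_of_abs_sub_le
        measurableSet_Ioc hg0 hωmono (hunif _ (hεk k))
        (fun t ht => hK0 _ (gridLeft_mem_Icc (hpos n) ht))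
        (fun t ht => hKk k t (Ioc_subset_Icc_self ht)) hk (hmeas k)).trans
          (by gcongr; exact hc k))
    _ = liminf (fun k => ∫⁻ t in Ioc 0 T, ENNReal.ofReal (Ψ (εk k) (uk k t) (u'k k t))) atTop
          + ENNReal.ofReal (ω θ) * ENNReal.ofReal Cg :=
      liminf_add_const _ _ _ (by isBoundedDefault) (by isBoundedDefault)
    _ ≤ _ := by gcongr

/-- **Liminf estimate for the dissipation integrals under strong Γ-convergence**
(the key step in the proof of Corollary 3.4). If the state-dependent dissipation
potentials `Ψ^ε_w` are uniformly continuous in the state `w ∈ K` (with modulus `ω` and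
superlinear gauge `g`) and Γ-converge strongly to `Ψ⁰_w`, and if `u_k → u₀` uniformly with
`u'_k ⇀ u'₀` weakly in `L¹(0,T;V)` and equi-integrability `∫ g(‖u'_k‖) ≤ C_g`, then
`∫₀ᵀ Ψ⁰_{u₀}(u'₀) ≤ liminf ∫₀ᵀ Ψ^{ε_k}_{u_k}(u'_k)`. -/
theorem liminf_dissipation_of_strong_gamma [CompleteSpace V]
    (T : ℝ) (hT : 0 < T) (K : Set V)
    (g : ℝ → ℝ) (hg0 : ∀ s, 0 ≤ g s)
    (hgsup : Tendsto (fun s => g s / s) atTop atTop)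
    (ω : ℝ → ℝ) (hωcont : Continuous ω) (hωmono : Monotone ω) (hω0 : ω 0 = 0)
    (hωnonneg : ∀ s, 0 ≤ ω s)
    (Ψ : ℝ → V → V → ℝ)
    (hΨ : ∀ ε ∈ Icc (0:ℝ) 1, ∀ w : V, LowerSemicontinuous (Ψ ε w) ∧
      ConvexOn ℝ univ (Ψ ε w) ∧ Ψ ε w 0 = 0 ∧ ∀ v : V, 0 ≤ Ψ ε w v)
    (hunif : ∀ ε ∈ Icc (0:ℝ) 1, ∀ w₁ ∈ K, ∀ w₂ ∈ K, ∀ v : V,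
      |Ψ ε w₁ v - Ψ ε w₂ v| ≤ ω ‖w₁ - w₂‖ * g ‖v‖)
    (hgamma : ∀ (εk : ℕ → ℝ) (wk : ℕ → V) (w : V),
      (∀ k, εk k ∈ Icc (0:ℝ) 1) → Tendsto εk atTop (𝓝 0) →
      (∀ k, wk k ∈ K) → w ∈ K → Tendsto wk atTop (𝓝 w) →
      (∀ (v : V) (vk : ℕ → V), Tendsto vk atTop (𝓝 v) →
        ((Ψ 0 w v : ℝ) : EReal) ≤
          Filter.liminf (fun k => ((Ψ (εk k) (wk k) (vk k) : ℝ) : EReal)) atTop)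
      ∧ ∀ v : V, ∃ vk : ℕ → V, Tendsto vk atTop (𝓝 v) ∧
          Tendsto (fun k => Ψ (εk k) (wk k) (vk k)) atTop (𝓝 (Ψ 0 w v)))
    (εk : ℕ → ℝ) (hεk : ∀ k, εk k ∈ Icc (0:ℝ) 1) (hεk0 : Tendsto εk atTop (𝓝 0))
    (uk : ℕ → ℝ → V) (u'k : ℕ → ℝ → V) (u0 : ℝ → V) (u'0 : ℝ → V)
    (hW11k : ∀ k, IntegrableOn (u'k k) (Ioc 0 T) ∧
      ∀ t ∈ Icc (0:ℝ) T, uk k t = uk k 0 + ∫ r in (0:ℝ)..t, u'k k r)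
    (hW110 : IntegrableOn u'0 (Ioc 0 T) ∧
      ∀ t ∈ Icc (0:ℝ) T, u0 t = u0 0 + ∫ r in (0:ℝ)..t, u'0 r)
    (hKk : ∀ k, ∀ t ∈ Icc (0:ℝ) T, uk k t ∈ K) (hK0 : ∀ t ∈ Icc (0:ℝ) T, u0 t ∈ K)
    (ha : TendstoUniformlyOn (fun k t => uk k t) u0 atTop (Icc (0:ℝ) T))
    (hb : ∀ η : ℝ → StrongDual ℝ V, StronglyMeasurable η →
      (∃ Cη : ℝ, ∀ t, ‖η t‖ ≤ Cη) →
      Tendsto (fun k => ∫ t in Ioc (0:ℝ) T, (η t) (u'k k t)) atTop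
        (𝓝 (∫ t in Ioc (0:ℝ) T, (η t) (u'0 t))))
    (Cg : ℝ)
    (hc : ∀ k, ∫⁻ t in Ioc (0:ℝ) T, ENNReal.ofReal (g ‖u'k k t‖) ≤ ENNReal.ofReal Cg) :
    ∫⁻ t in Ioc (0:ℝ) T, ENNReal.ofReal (Ψ 0 (u0 t) (u'0 t))
      ≤ Filter.liminf
          (fun k => ∫⁻ t in Ioc (0:ℝ) T, ENNReal.ofReal (Ψ (εk k) (uk k t) (u'k k t)))
          atTop :=
  liminf_dissipation_of_strong_gamma_general T hT K g hg0 ω hωcont hωmono hω0 Ψ hΨ hunif hgamma εk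
    hεk hεk0 uk u'k u0 u'0 hW11k hW110 hKk hK0 ha Cg hc
end
end

section
/- (Mosco continuity of state-dependent quadratic dissipation potentials on L²) Let Ω ⊂ ℝ^d be a bounded open set, I ∈ ℕ, and let A : Ω × ℝ^I → ℝ^{I×I}_{sym} be a Carathéodory function that is uniformly elliptic and bounded with constant C_A ≥ 1. For u ∈ L²(Ω;ℝ^I) define Ψ_u(v) = ∫_Ω ½⟨A(x,u(x))v(x), v(x)⟩ dx for v ∈ L²(Ω;ℝ^I). If u_n → u strongly in L²(Ω;ℝ^I), then Ψ_{u_n} Mosco-converges to Ψ_u in L²(Ω;ℝ^I); in particular: (i) for every sequence v_n ⇀ v converging weakly in L²(Ω;ℝ^I), Ψ_u(v) ≤ liminf_n Ψ_{u_n}(v_n); (ii) for every v ∈ L²(Ω;ℝ^I), Ψ_{u_n}(v) → Ψ_u(v), so constant sequences are recovery sequences. -/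
open MeasureTheory Filter Topology Set Matrix

noncomputable section

/-- The state-dependent quadratic dissipation potential
`Ψ_u(v) = ∫_Ω ½ ⟨A(x,u(x)) v(x), v(x)⟩ dx` on `L²(Ω;ℝ^I)`. -/
def dissipQuad (d I : ℕ) (Ω : Set (EuclideanSpace ℝ (Fin d)))
    (A : EuclideanSpace ℝ (Fin d) → (Fin I → ℝ) → Matrix (Fin I) (Fin I) ℝ)
    (u v : Lp (EuclideanSpace ℝ (Fin I)) 2 (volume.restrict Ω)) : ℝ :=
  ∫ x, (1/2) * ((A x (u x)).mulVec (v x) ⬝ᵥ (v x)) ∂(volume.restrict Ω)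

/-!
Write `Ψ_w(v) = ½ ⟨G_w v, v⟩_{L²}`, where `G_w` is multiplication by the matrix field
`x ↦ A(x, w(x))`. Since `A` is bounded and continuous in its second argument, dominated
convergence along a.e. convergent subsequences of `u_n` gives `G_{u_n} v → G_u v` strongly in
`L²`; this is the recovery part. For the liminf part, positivity of `A` gives the affine minorant
`Ψ_{u_n}(v_n) ≥ ⟨G_{u_n} v, v_n⟩ - Ψ_{u_n}(v)`, and a strongly convergent sequence paired with a
weakly convergent one converges, so the minorant tends to `2 Ψ_u(v) - Ψ_u(v)`.
-/

open TopologicalSpace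

namespace Matrix

variable {ι : Type*} [Fintype ι] {M : Matrix ι ι ℝ}

theorem IsSymm.mulVec_dotProduct_comm (hM : M.IsSymm) (v w : ι → ℝ) :
    M *ᵥ v ⬝ᵥ w = M *ᵥ w ⬝ᵥ v := by
  rw [dotProduct_comm, dotProduct_mulVec, ← vecMul_transpose, hM.eq]

theorem IsSymm.sq_mulVec_dotProduct_le (hM : M.IsSymm) (hpos : ∀ w, 0 ≤ M *ᵥ w ⬝ᵥ w)
    (v w : ι → ℝ) : (M *ᵥ v ⬝ᵥ w) ^ 2 ≤ (M *ᵥ v ⬝ᵥ v) * (M *ᵥ w ⬝ᵥ w) := by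
  have hquad (t : ℝ) :
      0 ≤ (M *ᵥ w ⬝ᵥ w) * (t * t) + 2 * (M *ᵥ v ⬝ᵥ w) * t + M *ᵥ v ⬝ᵥ v := by
    have := hpos (v + t • w)
    simp only [mulVec_add, mulVec_smul, add_dotProduct, dotProduct_add, smul_dotProduct,
      dotProduct_smul, smul_eq_mul, hM.mulVec_dotProduct_comm w v] at this
    linarith
  have := discrim_le_zero hquad
  rw [discrim] at this
  linarith

theorem IsSymm.mulVec_dotProduct_sub_half_le (hM : M.IsSymm) (hpos : ∀ w, 0 ≤ M *ᵥ w ⬝ᵥ w)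
    (p q : ι → ℝ) : M *ᵥ q ⬝ᵥ p - (M *ᵥ q ⬝ᵥ q) / 2 ≤ (M *ᵥ p ⬝ᵥ p) / 2 := by
  have := hpos (p - q)
  simp only [mulVec_sub, sub_dotProduct, dotProduct_sub, hM.mulVec_dotProduct_comm p q] at this
  linarith

theorem inner_toLp_mulVec (v w : EuclideanSpace ℝ ι) :
    inner ℝ (WithLp.toLp 2 (M *ᵥ v)) w = M *ᵥ v ⬝ᵥ w := by
  rw [EuclideanSpace.inner_eq_star_dotProduct, star_trivial, dotProduct_comm]

theorem dotProduct_self_ofLp (v : EuclideanSpace ℝ ι) : v.ofLp ⬝ᵥ v.ofLp = ‖v‖ ^ 2 := by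
  rw [← real_inner_self_eq_norm_sq, EuclideanSpace.inner_eq_star_dotProduct, star_trivial]

variable {C : ℝ}

theorem IsSymm.abs_mulVec_dotProduct_le (hM : M.IsSymm) (hpos : ∀ w, 0 ≤ M *ᵥ w ⬝ᵥ w)
    (hle : ∀ w, M *ᵥ w ⬝ᵥ w ≤ C * (w ⬝ᵥ w)) (hC : 0 ≤ C) (v w : EuclideanSpace ℝ ι) :
    |M *ᵥ v ⬝ᵥ w| ≤ C * ‖v‖ * ‖w‖ := by
  refine abs_le_of_sq_le_sq ?_ (mul_nonneg (mul_nonneg hC (norm_nonneg v)) (norm_nonneg w))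
  calc (M *ᵥ v ⬝ᵥ w) ^ 2 ≤ (M *ᵥ v ⬝ᵥ v) * (M *ᵥ w ⬝ᵥ w) := hM.sq_mulVec_dotProduct_le hpos _ _
    _ ≤ (C * ‖v‖ ^ 2) * (C * ‖w‖ ^ 2) := by
      rw [← dotProduct_self_ofLp, ← dotProduct_self_ofLp]
      exact mul_le_mul (hle _) (hle _) (hpos _)
        (mul_nonneg hC (by rw [dotProduct_self_ofLp]; positivity))
    _ = (C * ‖v‖ * ‖w‖) ^ 2 := by ring

theorem IsSymm.norm_toLp_mulVec_le (hM : M.IsSymm) (hpos : ∀ w, 0 ≤ M *ᵥ w ⬝ᵥ w)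
    (hle : ∀ w, M *ᵥ w ⬝ᵥ w ≤ C * (w ⬝ᵥ w)) (hC : 0 ≤ C) (v : EuclideanSpace ℝ ι) :
    ‖WithLp.toLp 2 (M *ᵥ v)‖ ≤ C * ‖v‖ := by
  set a : EuclideanSpace ℝ ι := WithLp.toLp 2 (M *ᵥ v)
  have : ‖a‖ ^ 2 ≤ C * ‖v‖ * ‖a‖ := by
    rw [← real_inner_self_eq_norm_sq, inner_toLp_mulVec]
    exact (le_abs_self _).trans (hM.abs_mulVec_dotProduct_le hpos hle hC v a)
  rcases (norm_nonneg a).eq_or_lt with ha | ha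
  · rw [← ha]; exact mul_nonneg hC (norm_nonneg v)
  · nlinarith

end Matrix

variable {α : Type*} [MeasurableSpace α] {μ : Measure α}

theorem aemeasurable_caratheodory_comp {β γ : Type*} [TopologicalSpace β] [MetrizableSpace β]
    [MeasurableSpace β] [SecondCountableTopology β] [OpensMeasurableSpace β] [Nonempty β]
    [TopologicalSpace γ] [PseudoMetrizableSpace γ] [MeasurableSpace γ] [BorelSpace γ]
    {f : α → β → γ} (hf_meas : ∀ z, Measurable (f · z)) (hf_cont : ∀ᵐ x ∂μ, Continuous (f x))
    {w : α → β} (hw : AEMeasurable w μ) : AEMeasurable (fun x => f x (w x)) μ := by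
  classical
  -- redefine `f` on a measurable null set to make it continuous in `z` everywhere
  set N := toMeasurable μ {x | ¬Continuous (f x)}
  have hN : ∀ᵐ x ∂μ, x ∉ N := by
    rw [← measure_eq_zero_iff_ae_notMem, measure_toMeasurable]
    exact ae_iff.mp hf_cont
  set z₀ : β := Classical.arbitrary β
  set g : β → α → γ := fun z x => if x ∈ N then f x z₀ else f x z
  have hg : Measurable (Function.uncurry g) := by
    refine measurable_uncurry_of_continuous_of_measurable (fun x => ?_)
      fun z => Measurable.ite (measurableSet_toMeasurable _ _) (hf_meas z₀) (hf_meas z)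
    by_cases hx : x ∈ N
    · simp only [g, hx, if_true, continuous_const]
    · simp only [g, hx, if_false]
      by_contra h
      exact hx (subset_toMeasurable _ _ h)
  refine ⟨fun x => g (hw.mk w x) x, hg.comp (hw.measurable_mk.prodMk measurable_id), ?_⟩
  filter_upwards [hw.ae_eq_mk, hN] with x hx hxN
  simp only [g, hxN, if_false, hx]

theorem tendsto_integral_comp_of_tendstoInMeasure {β G : Type*} [PseudoMetricSpace β]
    [NormedAddCommGroup G] [NormedSpace ℝ G] {F : α → β → G} {bound : α → ℝ}
    {f : ℕ → α → β} {g : α → β} (hF_meas : ∀ n, AEStronglyMeasurable (fun x => F x (f n x)) μ)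
    (hF_cont : ∀ᵐ x ∂μ, Continuous (F x)) (h_bound : ∀ᵐ x ∂μ, ∀ z, ‖F x z‖ ≤ bound x)
    (bound_integrable : Integrable bound μ) (hf : TendstoInMeasure μ f atTop g) :
    Tendsto (fun n => ∫ x, F x (f n x) ∂μ) atTop (𝓝 (∫ x, F x (g x) ∂μ)) := by
  refine tendsto_of_subseq_tendsto fun ns hns => ?_
  obtain ⟨ms, -, hms⟩ := (hf.comp hns).exists_seq_tendsto_ae
  refine ⟨ms, tendsto_integral_of_dominated_convergence bound (fun k => hF_meas _)
    bound_integrable (fun k => h_bound.mono fun x hx => hx _) ?_⟩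
  filter_upwards [hms, hF_cont] with x hx hFx
  exact (hFx.tendsto _).comp hx

theorem tendsto_inner_of_tendsto_of_forall_tendsto_inner {E : Type*} [NormedAddCommGroup E]
    [InnerProductSpace ℝ E] [CompleteSpace E] {x y : ℕ → E} {x₀ y₀ : E}
    (hx : Tendsto x atTop (𝓝 x₀))
    (hy : ∀ w, Tendsto (fun n => inner ℝ (y n) w) atTop (𝓝 (inner ℝ y₀ w))) :
    Tendsto (fun n => inner ℝ (x n) (y n)) atTop (𝓝 (inner ℝ x₀ y₀)) := by
  obtain ⟨M, hM⟩ : ∃ M, ∀ n, ‖innerSL ℝ (y n)‖ ≤ M := banach_steinhaus fun w => by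
    obtain ⟨M, hM⟩ := (hy w).norm.bddAbove_range
    exact ⟨M, fun n => by simpa only [innerSL_apply_apply] using hM (mem_range_self n)⟩
  have hsmall : Tendsto (fun n => inner ℝ (x n - x₀) (y n)) atTop (𝓝 0) := by
    refine squeeze_zero_norm (fun n => ?_)
      (by simpa using (tendsto_iff_norm_sub_tendsto_zero.mp hx).mul_const M)
    calc ‖inner ℝ (x n - x₀) (y n)‖ ≤ ‖x n - x₀‖ * ‖y n‖ := norm_inner_le_norm _ _
      _ ≤ ‖x n - x₀‖ * M := by
        gcongr
        simpa only [innerSL_apply_norm] using hM n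
  have hmain : Tendsto (fun n => inner ℝ x₀ (y n)) atTop (𝓝 (inner ℝ x₀ y₀)) := by
    simpa only [real_inner_comm x₀] using hy x₀
  simpa only [inner_sub_left, sub_add_cancel, zero_add] using hsmall.add hmain

theorem Filter.Tendsto.le_liminf_of_le {β γ : Type*} [CompleteLinearOrder β] [TopologicalSpace β]
    [OrderTopology β] {l : Filter γ} [l.NeBot] {a b : γ → β} {c : β} (ha : Tendsto a l (𝓝 c))
    (hab : ∀ n, a n ≤ b n) : c ≤ liminf b l :=
  ha.liminf_eq ▸ liminf_le_liminf (Eventually.of_forall hab)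

structure IsBoundedPosSemidefCaratheodory {ι : Type*} [Fintype ι] (μ : Measure α)
    (A : α → (ι → ℝ) → Matrix ι ι ℝ) (C : ℝ) : Prop where
  isSymm : ∀ x z, (A x z).IsSymm
  measurable_apply : ∀ z i j, Measurable fun x => A x z i j
  ae_continuous_apply : ∀ᵐ x ∂μ, ∀ i j, Continuous fun z => A x z i j
  nonneg : ∀ x z w, 0 ≤ A x z *ᵥ w ⬝ᵥ w
  le : ∀ x z w, A x z *ᵥ w ⬝ᵥ w ≤ C * (w ⬝ᵥ w)
  const_nonneg : 0 ≤ C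

namespace IsBoundedPosSemidefCaratheodory

variable {ι : Type*} [Fintype ι] {A : α → (ι → ℝ) → Matrix ι ι ℝ} {C : ℝ}
  (hA : IsBoundedPosSemidefCaratheodory μ A C)
include hA

theorem ae_continuous : ∀ᵐ x ∂μ, Continuous (A x) := by
  filter_upwards [hA.ae_continuous_apply] with x hx
  exact continuous_pi fun i => continuous_pi fun j => hx i j

theorem aestronglyMeasurable_mulVec {w v : α → EuclideanSpace ℝ ι}
    (hw : AEStronglyMeasurable w μ) (hv : AEStronglyMeasurable v μ) :
    AEStronglyMeasurable (fun x => WithLp.toLp 2 (A x (w x) *ᵥ v x)) μ := by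
  have hAw : AEMeasurable (fun x => Matrix.of.symm (A x (w x))) μ :=
    aemeasurable_caratheodory_comp (f := fun x z => Matrix.of.symm (A x z))
      (fun z => measurable_pi_lambda _ fun i => measurable_pi_lambda _ fun j =>
        hA.measurable_apply z i j)
      (hA.ae_continuous_apply.mono fun x hx => continuous_pi fun i => continuous_pi (hx i))
      ((PiLp.continuous_ofLp 2 _).measurable.comp_aemeasurable hw.aemeasurable)
  refine Continuous.comp_aestronglyMeasurable₂
    (g := fun (M : ι → ι → ℝ) (v : EuclideanSpace ℝ ι) => WithLp.toLp 2 (Matrix.of M *ᵥ v)) ?_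
    hAw.aestronglyMeasurable hv
  exact (PiLp.continuous_toLp 2 _).comp
    (Continuous.matrix_mulVec continuous_fst ((PiLp.continuous_ofLp 2 _).comp continuous_snd))

theorem memLp_mulVec {w v : α → EuclideanSpace ℝ ι} (hw : AEStronglyMeasurable w μ)
    (hv : MemLp v 2 μ) : MemLp (fun x => WithLp.toLp 2 (A x (w x) *ᵥ v x)) 2 μ := by
  refine (hv.const_smul C).of_le (hA.aestronglyMeasurable_mulVec hw hv.1) (ae_of_all _ fun x => ?_)
  rw [Pi.smul_apply, norm_smul, Real.norm_of_nonneg hA.const_nonneg]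
  exact (hA.isSymm x _).norm_toLp_mulVec_le (hA.nonneg x _) (hA.le x _) hA.const_nonneg _

def mulVecLp (w v : Lp (EuclideanSpace ℝ ι) 2 μ) : Lp (EuclideanSpace ℝ ι) 2 μ :=
  (hA.memLp_mulVec (Lp.aestronglyMeasurable w) (Lp.memLp v)).toLp _

theorem coeFn_mulVecLp (w v : Lp (EuclideanSpace ℝ ι) 2 μ) :
    hA.mulVecLp w v =ᵐ[μ] fun x => WithLp.toLp 2 (A x (w x) *ᵥ v x) :=
  MemLp.coeFn_toLp _

theorem inner_mulVecLp (w v p : Lp (EuclideanSpace ℝ ι) 2 μ) :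
    inner ℝ (hA.mulVecLp w v) p = ∫ x, A x (w x) *ᵥ v x ⬝ᵥ p x ∂μ := by
  rw [L2.inner_def]
  refine integral_congr_ae ?_
  filter_upwards [hA.coeFn_mulVecLp w v] with x hx
  rw [hx, inner_toLp_mulVec]

theorem inner_mulVecLp_sub_half_le (w p q : Lp (EuclideanSpace ℝ ι) 2 μ) :
    inner ℝ (hA.mulVecLp w q) p - inner ℝ (hA.mulVecLp w q) q / 2 ≤
      inner ℝ (hA.mulVecLp w p) p / 2 := by
  simp only [L2.inner_def, ← integral_div]
  rw [← integral_sub (L2.integrable_inner _ _) ((L2.integrable_inner _ _).div_const _)]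
  refine integral_mono_ae ((L2.integrable_inner _ _).sub ((L2.integrable_inner _ _).div_const _))
    ((L2.integrable_inner _ _).div_const _) ?_
  filter_upwards [hA.coeFn_mulVecLp w q, hA.coeFn_mulVecLp w p] with x hq hp
  simp only [hq, hp, inner_toLp_mulVec]
  exact (hA.isSymm x _).mulVec_dotProduct_sub_half_le (hA.nonneg x _) _ _

theorem tendsto_mulVecLp {u : ℕ → Lp (EuclideanSpace ℝ ι) 2 μ} {u₀ : Lp (EuclideanSpace ℝ ι) 2 μ}
    (hu : Tendsto u atTop (𝓝 u₀)) (v : Lp (EuclideanSpace ℝ ι) 2 μ) :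
    Tendsto (fun n => hA.mulVecLp (u n) v) atTop (𝓝 (hA.mulVecLp u₀ v)) := by
  set F : α → EuclideanSpace ℝ ι → ℝ := fun x z =>
    ‖WithLp.toLp 2 (A x z *ᵥ v x) - WithLp.toLp 2 (A x (u₀ x) *ᵥ v x)‖ ^ 2
  have hsq : ∀ n, ‖hA.mulVecLp (u n) v - hA.mulVecLp u₀ v‖ ^ 2 = ∫ x, F x (u n x) ∂μ := by
    intro n
    rw [← real_inner_self_eq_norm_sq, L2.inner_def]
    refine integral_congr_ae ?_
    filter_upwards [Lp.coeFn_sub (hA.mulVecLp (u n) v) (hA.mulVecLp u₀ v),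
      hA.coeFn_mulVecLp (u n) v, hA.coeFn_mulVecLp u₀ v] with x hx hn h₀
    rw [hx, Pi.sub_apply, hn, h₀, real_inner_self_eq_norm_sq]
  have hbound : ∀ x z, ‖F x z‖ ≤ (2 * C * ‖v x‖) ^ 2 := by
    intro x z
    have hle : ∀ z, ‖WithLp.toLp 2 (A x z *ᵥ v x)‖ ≤ C * ‖v x‖ := fun z =>
      (hA.isSymm x z).norm_toLp_mulVec_le (hA.nonneg x z) (hA.le x z) hA.const_nonneg _
    rw [Real.norm_of_nonneg (sq_nonneg _)]
    gcongr
    linarith [norm_sub_le (WithLp.toLp 2 (A x z *ᵥ v x)) (WithLp.toLp 2 (A x (u₀ x) *ᵥ v x)),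
      hle z, hle (u₀ x)]
  have hF : Tendsto (fun n => ∫ x, F x (u n x) ∂μ) atTop (𝓝 (∫ x, F x (u₀ x) ∂μ)) := by
    refine tendsto_integral_comp_of_tendstoInMeasure (fun n => ?_) ?_ (ae_of_all _ hbound)
      ((Lp.memLp v).norm.const_mul (2 * C)).integrable_sq (tendstoInMeasure_of_tendsto_Lp hu)
    · exact ((hA.aestronglyMeasurable_mulVec (Lp.aestronglyMeasurable _)
        (Lp.aestronglyMeasurable v)).sub (hA.aestronglyMeasurable_mulVec
        (Lp.aestronglyMeasurable _) (Lp.aestronglyMeasurable v))).norm.pow 2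
    · filter_upwards [hA.ae_continuous] with x hx
      have := hx.comp (PiLp.continuous_ofLp 2 fun _ : ι => ℝ)
      fun_prop
  simp only [F, sub_self, norm_zero, zero_pow two_ne_zero, integral_zero, ← hsq] at hF
  rw [tendsto_iff_norm_sub_tendsto_zero]
  simpa only [Real.sqrt_sq (norm_nonneg _), Real.sqrt_zero] using hF.sqrt

end IsBoundedPosSemidefCaratheodory

theorem dissipQuad_eq_inner_mulVecLp {d I : ℕ} {Ω : Set (EuclideanSpace ℝ (Fin d))}
    {A : EuclideanSpace ℝ (Fin d) → (Fin I → ℝ) → Matrix (Fin I) (Fin I) ℝ} {C : ℝ}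
    (hA : IsBoundedPosSemidefCaratheodory (volume.restrict Ω) A C)
    (w v : Lp (EuclideanSpace ℝ (Fin I)) 2 (volume.restrict Ω)) :
    dissipQuad d I Ω A w v = inner ℝ (hA.mulVecLp w v) v / 2 := by
  rw [dissipQuad, integral_const_mul, hA.inner_mulVecLp]
  ring

theorem mosco_quadratic_dissipation_general (d I : ℕ) (Ω : Set (EuclideanSpace ℝ (Fin d)))
    (A : EuclideanSpace ℝ (Fin d) → (Fin I → ℝ) → Matrix (Fin I) (Fin I) ℝ)
    (CA : ℝ) (hCA : 1 ≤ CA)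
    (hsymm : ∀ x z, (A x z).IsSymm)
    (hmeas : ∀ (z : Fin I → ℝ) (i j : Fin I), Measurable (fun x => A x z i j))
    (hcont : ∀ᵐ x ∂(volume.restrict Ω), ∀ i j : Fin I, Continuous (fun z => A x z i j))
    (hell : ∀ x (z w : Fin I → ℝ),
      CA⁻¹ * (w ⬝ᵥ w) ≤ (A x z).mulVec w ⬝ᵥ w ∧ (A x z).mulVec w ⬝ᵥ w ≤ CA * (w ⬝ᵥ w))
    (un : ℕ → Lp (EuclideanSpace ℝ (Fin I)) 2 (volume.restrict Ω))
    (u : Lp (EuclideanSpace ℝ (Fin I)) 2 (volume.restrict Ω))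
    (hun : Tendsto un atTop (𝓝 u)) :
    (∀ (v : Lp (EuclideanSpace ℝ (Fin I)) 2 (volume.restrict Ω))
       (vn : ℕ → Lp (EuclideanSpace ℝ (Fin I)) 2 (volume.restrict Ω)),
      (∀ w : Lp (EuclideanSpace ℝ (Fin I)) 2 (volume.restrict Ω),
        Tendsto (fun n => (inner ℝ (vn n) w : ℝ)) atTop (𝓝 (inner ℝ v w))) →
      ((dissipQuad d I Ω A u v : ℝ) : EReal) ≤
        Filter.liminf (fun n => ((dissipQuad d I Ω A (un n) (vn n) : ℝ) : EReal)) atTop)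
    ∧ ∀ v : Lp (EuclideanSpace ℝ (Fin I)) 2 (volume.restrict Ω),
        Tendsto (fun n => dissipQuad d I Ω A (un n) v) atTop
          (𝓝 (dissipQuad d I Ω A u v)) := by
  have hCA₀ : 0 ≤ CA := zero_le_one.trans hCA
  have hA : IsBoundedPosSemidefCaratheodory (volume.restrict Ω) A CA :=
    { isSymm := hsymm
      measurable_apply := hmeas
      ae_continuous_apply := hcont
      nonneg := fun x z w => le_trans (mul_nonneg (inv_nonneg.mpr hCA₀)
        (by simpa using dotProduct_star_self_nonneg w)) (hell x z w).1
      le := fun x z w => (hell x z w).2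
      const_nonneg := hCA₀ }
  have hG := fun v => hA.tendsto_mulVecLp hun v
  have hrecovery : ∀ v, Tendsto (fun n => dissipQuad d I Ω A (un n) v) atTop
      (𝓝 (dissipQuad d I Ω A u v)) := fun v => by
    simpa only [dissipQuad_eq_inner_mulVecLp hA] using
      ((hG v).inner tendsto_const_nhds).div_const 2
  refine ⟨fun v vn hvn => ?_, hrecovery⟩
  have hlower : Tendsto (fun n => inner ℝ (hA.mulVecLp (un n) v) (vn n) -
      dissipQuad d I Ω A (un n) v) atTop (𝓝 (dissipQuad d I Ω A u v)) := by
    convert (tendsto_inner_of_tendsto_of_forall_tendsto_inner (hG v) hvn).sub (hrecovery v) using 2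
    rw [dissipQuad_eq_inner_mulVecLp hA]
    ring
  refine (EReal.tendsto_coe.mpr hlower).le_liminf_of_le fun n => EReal.coe_le_coe_iff.mpr ?_
  simpa only [dissipQuad_eq_inner_mulVecLp hA] using hA.inner_mulVecLp_sub_half_le (un n) (vn n) v

/-- **Mosco continuity of state-dependent quadratic dissipation potentials on `L²`**
(Proposition 4.1, step (2.Ψc)). If `A` is a symmetric, uniformly elliptic and bounded
Carathéodory matrix function and `u_n → u` strongly in `L²(Ω;ℝ^I)`, then `Ψ_{u_n}`
Mosco-converges to `Ψ_u`: (i) the weak liminf estimate holds, and (ii) `Ψ_{u_n}(v) → Ψ_u(v)`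
for every `v`, so that constant sequences are (strong) recovery sequences. -/
theorem mosco_quadratic_dissipation (d I : ℕ) (Ω : Set (EuclideanSpace ℝ (Fin d)))
    (hΩopen : IsOpen Ω) (hΩbdd : Bornology.IsBounded Ω)
    (A : EuclideanSpace ℝ (Fin d) → (Fin I → ℝ) → Matrix (Fin I) (Fin I) ℝ)
    (CA : ℝ) (hCA : 1 ≤ CA)
    (hsymm : ∀ x z, (A x z).IsSymm)
    (hmeas : ∀ (z : Fin I → ℝ) (i j : Fin I), Measurable (fun x => A x z i j))
    (hcont : ∀ᵐ x ∂(volume.restrict Ω), ∀ i j : Fin I, Continuous (fun z => A x z i j))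
    (hell : ∀ x (z w : Fin I → ℝ),
      CA⁻¹ * (w ⬝ᵥ w) ≤ (A x z).mulVec w ⬝ᵥ w ∧ (A x z).mulVec w ⬝ᵥ w ≤ CA * (w ⬝ᵥ w))
    (un : ℕ → Lp (EuclideanSpace ℝ (Fin I)) 2 (volume.restrict Ω))
    (u : Lp (EuclideanSpace ℝ (Fin I)) 2 (volume.restrict Ω))
    (hun : Tendsto un atTop (𝓝 u)) :
    (∀ (v : Lp (EuclideanSpace ℝ (Fin I)) 2 (volume.restrict Ω))
       (vn : ℕ → Lp (EuclideanSpace ℝ (Fin I)) 2 (volume.restrict Ω)),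
      (∀ w : Lp (EuclideanSpace ℝ (Fin I)) 2 (volume.restrict Ω),
        Tendsto (fun n => (inner ℝ (vn n) w : ℝ)) atTop (𝓝 (inner ℝ v w))) →
      ((dissipQuad d I Ω A u v : ℝ) : EReal) ≤
        Filter.liminf (fun n => ((dissipQuad d I Ω A (un n) (vn n) : ℝ) : EReal)) atTop)
    ∧ ∀ v : Lp (EuclideanSpace ℝ (Fin I)) 2 (volume.restrict Ω),
        Tendsto (fun n => dissipQuad d I Ω A (un n) v) atTop
          (𝓝 (dissipQuad d I Ω A u v)) :=
  mosco_quadratic_dissipation_general d I Ω A CA hCA hsymm hmeas hcont hell un u hun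
end
end
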